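/- arXiv:1803.07588 — 9 statements merged into one kernel-verified Lean document; each statement's English description precedes it below -/
import Mathlib

section
/- Let f : ℝᵖ → ℝ be differentiable, μ-strongly convex (⟨∇f(x) − ∇f(x'), x − x'⟩ ≥ μ‖x − x'‖₂² for all x, x'), with L-Lipschitz continuous gradient (‖∇f(x) − ∇f(x')‖₂ ≤ L‖x − x'‖₂), where 0 < μ ≤ L. Let x* be the (unique) minimizer of f, and let α' satisfy 0 ≤ α' ≤ 2/(μ + L). Then for every x ∈ ℝᵖ, ‖x − α'∇f(x) − x*‖₂ ≤ (1 − α'μ)‖x − x*‖₂. -/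
open scoped RealInnerProductSpace

variable {p : ℕ}

lemma breg_aux (μ L : ℝ) (f : EuclideanSpace ℝ (Fin p) → ℝ)
    (hdiff : Differentiable ℝ f)
    (hsc : ∀ x x' : EuclideanSpace ℝ (Fin p),
      μ * ‖x - x'‖ ^ 2 ≤ ⟪gradient f x - gradient f x', x - x'⟫)
    (hLip : ∀ x x' : EuclideanSpace ℝ (Fin p),
      ‖gradient f x - gradient f x'‖ ≤ L * ‖x - x'‖)
    (x y : EuclideanSpace ℝ (Fin p)) :
    μ / 2 * ‖x - y‖ ^ 2 ≤ f x - f y - ⟪gradient f y, x - y⟫ ∧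
      f x - f y - ⟪gradient f y, x - y⟫ ≤ L / 2 * ‖x - y‖ ^ 2 := by
  set r := x - y with hr
  have hxy : y + r = x := by rw [hr]; abel
  -- continuity of the gradient
  have hgcont : Continuous (gradient f) := by
    rcases le_or_gt L 0 with hL | hL
    · have hcst : gradient f = fun _ => gradient f x := by
        funext a
        have h1 := hLip a x
        have h2 : L * ‖a - x‖ ≤ 0 := mul_nonpos_of_nonpos_of_nonneg hL (norm_nonneg _)
        have h3 := le_antisymm (h1.trans h2) (norm_nonneg _)
        rw [norm_eq_zero, sub_eq_zero] at h3
        exact h3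
      rw [hcst]; exact continuous_const
    · refine (LipschitzWith.of_dist_le_mul (K := ⟨L, hL.le⟩) ?_).continuous
      intro a b
      rw [dist_eq_norm, dist_eq_norm]; exact hLip a b
  have hderiv : ∀ t : ℝ, HasDerivAt (fun s : ℝ => f (y + s • r))
      ⟪gradient f (y + t • r), r⟫ t := by
    intro t
    have hc : HasDerivAt (fun s : ℝ => y + s • r) r t := by
      simpa using ((hasDerivAt_id t).smul_const r).const_add y
    have hf := (hdiff (y + t • r)).hasGradientAt.hasFDerivAt
    simpa [InnerProductSpace.toDual_apply_apply, real_inner_comm, Function.comp_def] using hf.comp_hasDerivAt t hc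
  have hcont : Continuous fun t : ℝ => ⟪gradient f (y + t • r), r⟫ :=
    (hgcont.comp (by continuity)).inner continuous_const
  have hint : f x - f y = ∫ t in (0:ℝ)..1, ⟪gradient f (y + t • r), r⟫ := by
    have h := intervalIntegral.integral_eq_sub_of_hasDerivAt
      (f := fun s : ℝ => f (y + s • r)) (a := 0) (b := 1)
      (fun t _ => hderiv t) (hcont.intervalIntegrable 0 1)
    simp only [one_smul, zero_smul, add_zero, hxy] at h
    rw [h]
  have hD : f x - f y - ⟪gradient f y, r⟫
      = ∫ t in (0:ℝ)..1, ⟪gradient f (y + t • r) - gradient f y, r⟫ := by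
    rw [hint]
    simp only [inner_sub_left]
    rw [intervalIntegral.integral_sub (hcont.intervalIntegrable 0 1)
      intervalIntegrable_const]
    simp
  have hlowint : ∫ t in (0:ℝ)..1, μ * t * ‖r‖ ^ 2 = μ / 2 * ‖r‖ ^ 2 := by
    have : (fun t : ℝ => μ * t * ‖r‖ ^ 2) = fun t : ℝ => (μ * ‖r‖ ^ 2) * t := by
      funext t; ring
    rw [this, intervalIntegral.integral_const_mul, integral_id]
    ring
  have hhighint : ∫ t in (0:ℝ)..1, L * t * ‖r‖ ^ 2 = L / 2 * ‖r‖ ^ 2 := by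
    have : (fun t : ℝ => L * t * ‖r‖ ^ 2) = fun t : ℝ => (L * ‖r‖ ^ 2) * t := by
      funext t; ring
    rw [this, intervalIntegral.integral_const_mul, integral_id]
    ring
  have hcontsub : Continuous fun t : ℝ => ⟪gradient f (y + t • r) - gradient f y, r⟫ := by
    simp only [inner_sub_left]
    exact hcont.sub continuous_const
  constructor
  · rw [hD, ← hlowint]
    apply intervalIntegral.integral_mono_on zero_le_one
      (((continuous_const.mul continuous_id).mul continuous_const : Continuous fun t : ℝ => μ * t * ‖r‖ ^ 2).intervalIntegrable 0 1)
      (hcontsub.intervalIntegrable 0 1)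
    intro t ht
    simp only [Pi.mul_apply, id_eq]
    rcases eq_or_lt_of_le ht.1 with h0 | h0
    · simp [← h0]
    · have h1 := hsc (y + t • r) y
      have heq : y + t • r - y = t • r := by abel
      rw [heq, inner_smul_right, norm_smul, Real.norm_eq_abs, abs_of_pos h0] at h1
      nlinarith
  · rw [hD, ← hhighint]
    apply intervalIntegral.integral_mono_on zero_le_one
      (hcontsub.intervalIntegrable 0 1)
      (((continuous_const.mul continuous_id).mul continuous_const : Continuous fun t : ℝ => L * t * ‖r‖ ^ 2).intervalIntegrable 0 1)
    intro t ht
    simp only [Pi.mul_apply, id_eq]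
    have h1 := real_inner_le_norm (gradient f (y + t • r) - gradient f y) r
    have h2 := hLip (y + t • r) y
    have heq : y + t • r - y = t • r := by abel
    rw [heq, norm_smul, Real.norm_eq_abs, abs_of_nonneg ht.1] at h2
    nlinarith [norm_nonneg r, norm_nonneg (gradient f (y + t • r) - gradient f y)]

lemma coco_aux (C : ℝ) (hC : 0 < C) (F : EuclideanSpace ℝ (Fin p) → ℝ)
    (G : EuclideanSpace ℝ (Fin p) → EuclideanSpace ℝ (Fin p))
    (hB : ∀ a b, 0 ≤ F a - F b - ⟪G b, a - b⟫)
    (hU : ∀ a b, F a - F b - ⟪G b, a - b⟫ ≤ C / 2 * ‖a - b‖ ^ 2)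
    (a b : EuclideanSpace ℝ (Fin p)) :
    ‖G a - G b‖ ^ 2 ≤ 2 * C * (F a - F b - ⟪G b, a - b⟫) := by
  set v := G a - G b with hv
  set z := a - (1 / C) • v with hz
  have h1 := hB z b
  have h2 := hU z a
  have hza : z - a = -((1 / C) • v) := by rw [hz]; abel
  have e1 : ⟪G a, z - a⟫ = -(1 / C * ⟪G a, v⟫) := by
    rw [hza, inner_neg_right, real_inner_smul_right]
  have e2 : ‖z - a‖ ^ 2 = (1 / C) ^ 2 * ‖v‖ ^ 2 := by
    rw [hza, norm_neg, norm_smul, mul_pow, Real.norm_eq_abs, sq_abs]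
  have e3 : ⟪G b, z - b⟫ = ⟪G b, a - b⟫ - 1 / C * ⟪G b, v⟫ := by
    have : z - b = (a - b) - (1 / C) • v := by rw [hz]; abel
    rw [this, inner_sub_right, real_inner_smul_right]
  have e4 : ⟪G a, v⟫ - ⟪G b, v⟫ = ‖v‖ ^ 2 := by
    rw [← inner_sub_left, ← hv, real_inner_self_eq_norm_sq]
  rw [e3] at h1
  rw [e1, e2] at h2
  have hC' : C ≠ 0 := ne_of_gt hC
  have e4' : 1 / C * ⟪G a, v⟫ - 1 / C * ⟪G b, v⟫ = 1 / C * ‖v‖ ^ 2 := by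
    rw [← mul_sub, e4]
  have e5 : C / 2 * ((1 / C) ^ 2 * ‖v‖ ^ 2) = 1 / (2 * C) * ‖v‖ ^ 2 := by
    field_simp
  have e6 : 1 / C * ‖v‖ ^ 2 = 2 * (1 / (2 * C) * ‖v‖ ^ 2) := by field_simp
  have hsum : ‖v‖ ^ 2 / (2 * C) ≤ F a - F b - ⟪G b, a - b⟫ := by
    rw [div_eq_mul_one_div]
    linarith [h1, h2, e4', e5, e6]
  rw [div_le_iff₀ (by positivity : (0:ℝ) < 2 * C)] at hsum
  linarith

set_option maxHeartbeats 1000000 in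
/-- If `f` is differentiable, `μ`-strongly convex with `L`-Lipschitz gradient
(`0 < μ ≤ L`), `x*` is its minimizer, and `0 ≤ α' ≤ 2/(μ+L)`, then
`‖x − α'∇f(x) − x*‖ ≤ (1 − α'μ)‖x − x*‖` for all `x`. -/
theorem push_pull_stmt3 (p : ℕ) (μ L : ℝ) (hμ : 0 < μ) (hμL : μ ≤ L)
    (f : EuclideanSpace ℝ (Fin p) → ℝ)
    (hdiff : Differentiable ℝ f)
    (hsc : ∀ x x' : EuclideanSpace ℝ (Fin p),
      μ * ‖x - x'‖ ^ 2 ≤ ⟪gradient f x - gradient f x', x - x'⟫)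
    (hLip : ∀ x x' : EuclideanSpace ℝ (Fin p),
      ‖gradient f x - gradient f x'‖ ≤ L * ‖x - x'‖)
    (xstar : EuclideanSpace ℝ (Fin p)) (hmin : ∀ y, f xstar ≤ f y)
    (α' : ℝ) (hα0 : 0 ≤ α') (hα : α' ≤ 2 / (μ + L))
    (x : EuclideanSpace ℝ (Fin p)) :
    ‖x - α' • gradient f x - xstar‖ ≤ (1 - α' * μ) * ‖x - xstar‖ := by
  have hμL0 : 0 < μ + L := by linarith
  have hαμ : α' * μ ≤ 1 := by
    have h2 : 2 / (μ + L) ≤ 1 / μ := by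
      rw [div_le_div_iff₀ hμL0 hμ]; linarith
    have := hα.trans h2
    calc α' * μ ≤ 1/μ * μ := by nlinarith
    _ = 1 := by field_simp
  -- gradient vanishes at the minimizer
  have hgrad0 : gradient f xstar = 0 := by
    have h : IsLocalMin f xstar := (isMinOn_univ_iff.2 hmin).isLocalMin (by simp)
    rw [gradient, h.fderiv_eq_zero, map_zero]
  by_cases hx : x = xstar
  · subst hx
    rw [hgrad0]
    simp [sub_self]
  -- shifted function and its "gradient"
  set F : EuclideanSpace ℝ (Fin p) → ℝ := fun z => f z - μ / 2 * ‖z‖ ^ 2 with hF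
  set G : EuclideanSpace ℝ (Fin p) → EuclideanSpace ℝ (Fin p) :=
    fun z => gradient f z - μ • z with hG
  have hbregF : ∀ a b, F a - F b - ⟪G b, a - b⟫
      = (f a - f b - ⟪gradient f b, a - b⟫) - μ / 2 * ‖a - b‖ ^ 2 := by
    intro a b
    have hexp : ‖a - b‖ ^ 2 = ‖a‖ ^ 2 - 2 * ⟪b, a⟫ + ‖b‖ ^ 2 := by
      rw [norm_sub_sq_real, real_inner_comm]
    simp only [hF, hG, inner_sub_left, inner_sub_right, real_inner_smul_left,
      real_inner_self_eq_norm_sq]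
    rw [hexp]
    ring
  -- coercivity: (μ+L)⟪u,r⟫ ≥ ‖u‖² + μL‖r‖² where u = ∇f x, r = x - x*
  set u := gradient f x with hu
  set r := x - xstar with hr
  have hB0 : ∀ a b : EuclideanSpace ℝ (Fin p), 0 ≤ F a - F b - ⟪G b, a - b⟫ := by
    intro a b
    rw [hbregF]
    linarith [(breg_aux μ L f hdiff hsc hLip a b).1]
  have hvkey : ∀ ε > (0:ℝ), ‖G x - G xstar‖ ^ 2 ≤ (L - μ + ε) * ⟪G x - G xstar, r⟫ := by
    intro ε hε
    have hCpos : 0 < L - μ + ε := by linarith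
    have hU : ∀ a b, F a - F b - ⟪G b, a - b⟫ ≤ (L - μ + ε) / 2 * ‖a - b‖ ^ 2 := by
      intro a b
      rw [hbregF]
      have := (breg_aux μ L f hdiff hsc hLip a b).2
      nlinarith [sq_nonneg ‖a - b‖]
    have h1 := coco_aux (L - μ + ε) hCpos F G hB0 hU x xstar
    have h2 := coco_aux (L - μ + ε) hCpos F G hB0 hU xstar x
    have hsym : ‖G xstar - G x‖ = ‖G x - G xstar‖ := by rw [norm_sub_rev]
    rw [hsym] at h2
    have hadd : (F x - F xstar - ⟪G xstar, x - xstar⟫)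
        + (F xstar - F x - ⟪G x, xstar - x⟫) = ⟪G x - G xstar, r⟫ := by
      have hns : xstar - x = -(x - xstar) := by abel
      have hrhs : ⟪G x - G xstar, x - xstar⟫
          = ⟪G x, x - xstar⟫ - ⟪G xstar, x - xstar⟫ := inner_sub_left _ _ _
      rw [hr, hrhs, hns, inner_neg_right]
      ring
    nlinarith
  have hvr : 0 ≤ ⟪G x - G xstar, r⟫ := by
    have h := hsc x xstar
    have : G x - G xstar = (u - gradient f xstar) - μ • r := by
      rw [hG, hu, hr]
      simp only
      rw [smul_sub]
      abel
    rw [this, inner_sub_left, real_inner_smul_left, real_inner_self_eq_norm_sq]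
    rw [← hr] at h
    nlinarith
  have hvfinal : ‖G x - G xstar‖ ^ 2 ≤ (L - μ) * ⟪G x - G xstar, r⟫ := by
    have key : ∀ δ > (0:ℝ), ‖G x - G xstar‖ ^ 2 ≤ (L - μ) * ⟪G x - G xstar, r⟫ + δ := by
      intro δ hδ
      set K := ⟪G x - G xstar, r⟫
      have hK1 : 0 < K + 1 := by linarith
      have := hvkey (δ / (K + 1)) (by positivity)
      have h2 : (δ / (K + 1)) * K ≤ δ := by
        rw [div_mul_eq_mul_div, div_le_iff₀ hK1]
        nlinarith
      nlinarith
    linarith [le_of_forall_pos_le_add key]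
  -- translate to u, r
  have hGsub : G x - G xstar = u - μ • r := by
    rw [hG, hu, hr]
    simp only
    rw [hgrad0, smul_sub]
    abel
  rw [hGsub] at hvfinal
  have husub : u - gradient f xstar = u := by rw [hgrad0, sub_zero]
  -- scalar quantities
  set A := ‖r‖ ^ 2 with hA
  set B := ⟪u, r⟫ with hB
  set Csq := ‖u‖ ^ 2 with hCsq
  have hexpand : ‖u - μ • r‖ ^ 2 = Csq - 2 * μ * B + μ ^ 2 * A := by
    rw [norm_sub_sq_real, real_inner_smul_right, norm_smul, Real.norm_eq_abs]
    rw [mul_pow, sq_abs, hA, hB, hCsq]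
    ring
  have hinner2 : ⟪u - μ • r, r⟫ = B - μ * A := by
    rw [inner_sub_left, real_inner_smul_left, real_inner_self_eq_norm_sq, hA, hB]
  rw [hexpand, hinner2] at hvfinal
  -- hvfinal : Csq - 2μB + μ²A ≤ (L-μ)(B - μA), i.e. (μ+L)B ≥ Csq + μLA
  have hsc' : μ * A ≤ B := by
    have h := hsc x xstar
    rw [hgrad0, sub_zero] at h
    exact h
  have hCS : B ^ 2 ≤ Csq * A := by
    have h2 := abs_real_inner_le_norm u r
    rw [hA, hB, hCsq]
    nlinarith [sq_abs ⟪u, r⟫, abs_nonneg ⟪u, r⟫, norm_nonneg u, norm_nonneg r]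
  have hApos : 0 < A := by
    rw [hA]
    have hrne : r ≠ 0 := by rw [hr]; exact sub_ne_zero_of_ne hx
    exact pow_pos (norm_pos_iff.mpr hrne) 2
  have hCge : μ ^ 2 * A ≤ Csq := by
    nlinarith
  -- final algebra
  have hRHS : 0 ≤ (1 - α' * μ) := by linarith
  have hgoalsq : ‖r - α' • u‖ ^ 2 ≤ ((1 - α' * μ) * ‖r‖) ^ 2 := by
    have hlhs : ‖r - α' • u‖ ^ 2 = A - 2 * α' * B + α' ^ 2 * Csq := by
      rw [norm_sub_sq_real, real_inner_smul_right, norm_smul, Real.norm_eq_abs]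
      rw [mul_pow, sq_abs, hA, hB, hCsq, real_inner_comm r u]
      ring
    have hrhs : ((1 - α' * μ) * ‖r‖) ^ 2 = (1 - α' * μ) ^ 2 * A := by
      rw [mul_pow, hA]
    rw [hlhs, hrhs]
    have hα2 : α' * (μ + L) ≤ 2 := by
      rw [le_div_iff₀ hμL0] at hα
      linarith
    nlinarith [mul_nonneg hα0 (sub_nonneg.2 hCge),
      mul_nonneg (mul_nonneg hα0 (sub_nonneg.2 hCge)) (sub_nonneg.2 hα2),
      mul_nonneg hα0 (sub_nonneg.2 hsc')]
  have hfin : ‖r - α' • u‖ ≤ (1 - α' * μ) * ‖r‖ := by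
    have h1 := Real.sqrt_le_sqrt hgoalsq
    rwa [Real.sqrt_sq (norm_nonneg _), Real.sqrt_sq (by positivity)] at h1
  have : x - α' • gradient f x - xstar = r - α' • u := by
    rw [hr, hu]; abel
  rw [this, hr]
  exact hfin
end

section
/- Let R ∈ ℝ^{n×n} be a nonnegative row-stochastic matrix (R·1 = 1) with R_{ii} > 0 for all i, and suppose the root set 𝓡_R of the directed graph 𝓖_R induced by R is nonempty. Let u ∈ ℝⁿ be any nonnegative vector satisfying uᵀR = uᵀ and uᵀ1 = n. Then for every index i ∈ {1,…,n}, u_i > 0 if and only if i ∈ 𝓡_R. -/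
/-- In the directed graph `𝓖_M` induced by a nonnegative matrix `M` (edge from `j` to `i` iff
`M i j > 0`), a vertex `r` is a root iff every vertex is reachable from `r`. -/
def Matrix.IsGraphRoot {n : ℕ} (M : Matrix (Fin n) (Fin n) ℝ) (r : Fin n) : Prop :=
  ∀ i : Fin n, Relation.ReflTransGen (fun a b : Fin n => 0 < M b a) r i

/-- For a nonnegative row-stochastic matrix `R` with positive diagonal and
nonempty root set, a nonnegative left eigenvector `u` with `uᵀ1 = n` satisfies
`uᵢ > 0 ↔ i ∈ 𝓡_R`. -/
theorem push_pull_stmt6 (n : ℕ)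
    (R : Matrix (Fin n) (Fin n) ℝ)
    (hRnonneg : ∀ i j, 0 ≤ R i j)
    (hRrow : R.mulVec (fun _ => (1 : ℝ)) = fun _ => (1 : ℝ))
    (hRdiag : ∀ i, 0 < R i i)
    (hroot : ∃ r, R.IsGraphRoot r)
    (u : Fin n → ℝ)
    (hu_nonneg : ∀ i, 0 ≤ u i)
    (hu_eig : Matrix.vecMul u R = u)
    (hu_sum : ∑ i, u i = (n : ℝ)) :
    ∀ i, 0 < u i ↔ R.IsGraphRoot i := by
  classical
  obtain ⟨r, hr⟩ := hroot
  -- the "chain" step relation: a → b iff R a b > 0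
  set step : Fin n → Fin n → Prop := fun a b => 0 < R a b with hstep
  -- graph reachability is reversed chain reachability
  have hswapr : ∀ a b : Fin n,
      Relation.ReflTransGen (fun a b : Fin n => 0 < R b a) a b ↔
        Relation.ReflTransGen step b a := by
    intro a b
    constructor
    · intro h
      induction h with
      | refl => exact Relation.ReflTransGen.refl
      | tail _ h2 ih => exact Relation.ReflTransGen.head h2 ih
    · intro h
      induction h with
      | refl => exact Relation.ReflTransGen.refl
      | tail _ h2 ih => exact Relation.ReflTransGen.head h2 ih
  -- stationarity pointwise
  have hu : ∀ j, u j = ∑ k, u k * R k j := by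
    intro j
    conv_lhs => rw [← hu_eig]
    simp [Matrix.vecMul, dotProduct]
  -- row sums are 1
  have hrow : ∀ k, ∑ j, R k j = 1 := by
    intro k
    have := congrFun hRrow k
    simpa [Matrix.mulVec, dotProduct] using this
  -- single step forward propagation of positivity
  have hpos_step : ∀ a c : Fin n, 0 < u a → step a c → 0 < u c := by
    intro a c ha hac
    have h1 : u a * R a c ≤ ∑ k, u k * R k c := by
      apply Finset.single_le_sum (f := fun k => u k * R k c)
      · intro k _
        exact mul_nonneg (hu_nonneg k) (hRnonneg k c)
      · exact Finset.mem_univ a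
    have h2 : 0 < u a * R a c := mul_pos ha hac
    rw [← hu c] at h1
    linarith
  -- multi-step forward propagation
  have hforward : ∀ a b : Fin n, 0 < u a → Relation.ReflTransGen step a b → 0 < u b := by
    intro a b ha hab
    induction hab with
    | refl => exact ha
    | tail _ h2 ih => exact hpos_step _ _ ih h2
  -- C : vertices chain-reachable from the root r
  set C : Finset (Fin n) := Finset.univ.filter (fun x => Relation.ReflTransGen step r x)
    with hCdef
  have hmemC : ∀ x, x ∈ C ↔ Relation.ReflTransGen step r x := by
    intro x; simp [hCdef]
  have hrC : r ∈ C := (hmemC r).2 Relation.ReflTransGen.refl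
  -- C is closed under chain steps
  have hclosedC : ∀ k ∈ C, ∀ j, 0 < R k j → j ∈ C := by
    intro k hk j hj
    exact (hmemC j).2 ((hmemC k).1 hk |>.tail hj)
  -- rows starting in C have all their mass in C
  have hrowC : ∀ k ∈ C, ∑ j ∈ C, R k j = 1 := by
    intro k hk
    rw [← hrow k]
    apply Finset.sum_subset (Finset.subset_univ C)
    intro j _ hj
    by_contra hne
    exact hj (hclosedC k hk j (lt_of_le_of_ne (hRnonneg k j) (Ne.symm hne)))
  -- the mass balance on C
  have hbal : ∑ k ∈ Cᶜ, u k * ∑ j ∈ C, R k j = 0 := by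
    have h1 : ∑ j ∈ C, u j = ∑ k, u k * ∑ j ∈ C, R k j := by
      calc ∑ j ∈ C, u j = ∑ j ∈ C, ∑ k, u k * R k j :=
            Finset.sum_congr rfl (fun j _ => hu j)
        _ = ∑ k, ∑ j ∈ C, u k * R k j := Finset.sum_comm
        _ = ∑ k, u k * ∑ j ∈ C, R k j := by
            exact Finset.sum_congr rfl (fun k _ => (Finset.mul_sum _ _ _).symm)
    have h2 : ∑ k, u k * ∑ j ∈ C, R k j
        = ∑ k ∈ C, u k * ∑ j ∈ C, R k j + ∑ k ∈ Cᶜ, u k * ∑ j ∈ C, R k j :=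
      (Finset.sum_add_sum_compl C _).symm
    have h3 : ∑ k ∈ C, u k * ∑ j ∈ C, R k j = ∑ k ∈ C, u k := by
      apply Finset.sum_congr rfl
      intro k hk
      rw [hrowC k hk, mul_one]
    rw [h2, h3] at h1
    linarith
  -- if u_k > 0 and k ∉ C then row k vanishes on C
  have hC0 : ∀ k, k ∉ C → 0 < u k → ∀ j ∈ C, R k j = 0 := by
    intro k hk huk j hj
    have hterm : u k * ∑ j ∈ C, R k j = 0 := by
      have hnn : ∀ m ∈ Cᶜ, 0 ≤ u m * ∑ j ∈ C, R m j := by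
        intro m _
        exact mul_nonneg (hu_nonneg m) (Finset.sum_nonneg fun j _ => hRnonneg m j)
      have := (Finset.sum_eq_zero_iff_of_nonneg hnn).1 hbal k (Finset.mem_compl.2 hk)
      exact this
    have hsum0 : ∑ j ∈ C, R k j = 0 := by
      rcases mul_eq_zero.1 hterm with h | h
      · exact absurd h (ne_of_gt huk)
      · exact h
    exact (Finset.sum_eq_zero_iff_of_nonneg (fun j _ => hRnonneg k j)).1 hsum0 j hj
  -- key: positive-mass vertices that chain-reach r are in C
  have hkey : ∀ k, Relation.ReflTransGen step k r → 0 < u k → k ∈ C := by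
    intro k hkr
    induction hkr using Relation.ReflTransGen.head_induction_on with
    | refl => intro _; exact hrC
    | head h' h ih =>
      rename_i a c
      intro ha
      by_contra haC
      have hc : 0 < u c := hpos_step a c ha h'
      have hcC : c ∈ C := ih hc
      have : R a c = 0 := hC0 a haC ha c hcC
      rw [hstep] at h'
      exact absurd h' (by rw [this]; exact lt_irrefl 0)
  intro i
  constructor
  · -- u_i > 0 → i is a root
    intro hui x
    have hir : Relation.ReflTransGen step i r := (hswapr r i).1 (hr i)
    have hiC : i ∈ C := hkey i hir hui
    have hri : Relation.ReflTransGen step r i := (hmemC i).1 hiC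
    have hxr : Relation.ReflTransGen step x r := (hswapr r x).1 (hr x)
    exact (hswapr i x).2 (hxr.trans hri)
  · -- i is a root → u_i > 0
    intro hi
    have hn : 0 < n := i.pos
    have hsum_pos : (0 : ℝ) < ∑ k, u k := by
      rw [hu_sum]
      exact_mod_cast hn
    have hex : ∃ s, 0 < u s := by
      by_contra h
      push_neg at h
      have : ∑ k, u k = 0 := Finset.sum_eq_zero fun k _ =>
        le_antisymm (h k) (hu_nonneg k)
      linarith
    obtain ⟨s, hs⟩ := hex
    have hsi : Relation.ReflTransGen step s i := (hswapr i s).1 (hi s)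
    exact hforward s i hs hsi
end

section
/- Let R ∈ ℝ^{n×n} be nonnegative row-stochastic (R·1 = 1) and C ∈ ℝ^{n×n} be nonnegative column-stochastic (1ᵀC = 1ᵀ), and assume the root sets 𝓡_R (of the graph 𝓖_R induced by R) and 𝓡_{Cᵀ} (of the graph 𝓖_{Cᵀ} induced by Cᵀ) are both nonempty. Let u ∈ ℝⁿ be a nonnegative vector with uᵀR = uᵀ and uᵀ1 = n, and let v ∈ ℝⁿ be a nonnegative vector with Cv = v and 1ᵀv = n. Then 𝓡_R ∩ 𝓡_{Cᵀ} ≠ ∅ if and only if uᵀv > 0. -/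
open Finset

private lemma supp_fwd {n : ℕ} (R : Matrix (Fin n) (Fin n) ℝ)
    (hRnonneg : ∀ i j, 0 ≤ R i j) (u : Fin n → ℝ) (hu_nonneg : ∀ i, 0 ≤ u i)
    (hu_eig : Matrix.vecMul u R = u) {a b : Fin n} (ha : 0 < u a) (hab : 0 < R a b) :
    0 < u b := by
  have hub : u b = ∑ k, u k * R k b := by
    have := congrFun hu_eig b
    simpa [Matrix.vecMul, dotProduct] using this.symm
  have h1 : 0 < u a * R a b := mul_pos ha hab
  have h2 : u a * R a b ≤ ∑ k, u k * R k b :=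
    Finset.single_le_sum (fun k _ => mul_nonneg (hu_nonneg k) (hRnonneg k b)) (mem_univ a)
  rw [hub]; linarith

private lemma supp_path {n : ℕ} (R : Matrix (Fin n) (Fin n) ℝ)
    (hRnonneg : ∀ i j, 0 ≤ R i j) (u : Fin n → ℝ) (hu_nonneg : ∀ i, 0 ≤ u i)
    (hu_eig : Matrix.vecMul u R = u) {a b : Fin n}
    (h : Relation.ReflTransGen (fun x y : Fin n => 0 < R x y) a b) (ha : 0 < u a) :
    0 < u b := by
  induction h with
  | refl => exact ha
  | tail _ hxy ih => exact supp_fwd R hRnonneg u hu_nonneg hu_eig ih hxy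

private lemma key {n : ℕ} (R : Matrix (Fin n) (Fin n) ℝ)
    (hRnonneg : ∀ i j, 0 ≤ R i j)
    (hRrow : R.mulVec (fun _ => (1 : ℝ)) = fun _ => (1 : ℝ))
    (hRroot : ∃ r, R.IsGraphRoot r)
    (u : Fin n → ℝ) (hu_nonneg : ∀ i, 0 ≤ u i)
    (hu_eig : Matrix.vecMul u R = u) (hu_pos : 0 < ∑ i, u i) :
    ∀ i, 0 < u i ↔ R.IsGraphRoot i := by
  classical
  obtain ⟨r, hr⟩ := hRroot
  -- translate rootness into Markov reachability
  have root_iff : ∀ s, R.IsGraphRoot s ↔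
      ∀ i, Relation.ReflTransGen (fun x y : Fin n => 0 < R x y) i s := by
    intro s
    constructor
    · intro h i
      exact (Relation.reflTransGen_swap).mp (h i)
    · intro h i
      exact (Relation.reflTransGen_swap).mpr (h i)
  set E : Fin n → Fin n → Prop := fun x y => 0 < R x y with hE
  have rowsum : ∀ k, ∑ j, R k j = 1 := by
    intro k
    have := congrFun hRrow k
    simpa [Matrix.mulVec, dotProduct] using this
  set T : Finset (Fin n) := univ.filter (fun k => R.IsGraphRoot k) with hT
  have hmemT : ∀ k, k ∈ T ↔ R.IsGraphRoot k := by
    intro k; simp [hT]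
  have hrT : r ∈ T := (hmemT r).mpr hr
  have Tfwd : ∀ k ∈ T, ∀ j, 0 < R k j → j ∈ T := by
    intro k hk j hkj
    rw [hmemT] at hk ⊢
    rw [root_iff] at hk ⊢
    intro i
    exact (hk i).tail hkj
  have Trowsum : ∀ k ∈ T, ∑ j ∈ T, R k j = 1 := by
    intro k hk
    rw [← rowsum k]
    apply Finset.sum_subset (Finset.subset_univ T)
    intro j _ hj
    by_contra h
    exact hj (Tfwd k hk j (lt_of_le_of_ne (hRnonneg k j) (Ne.symm h)))
  -- mass identity
  have mass : ∑ k ∈ Tᶜ, u k * (∑ j ∈ T, R k j) = 0 := by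
    have h1 : ∑ j ∈ T, u j = ∑ k, u k * (∑ j ∈ T, R k j) := by
      calc ∑ j ∈ T, u j = ∑ j ∈ T, ∑ k, u k * R k j := by
            apply Finset.sum_congr rfl
            intro j _
            have := congrFun hu_eig j
            simpa [Matrix.vecMul, dotProduct] using this.symm
        _ = ∑ k, ∑ j ∈ T, u k * R k j := Finset.sum_comm
        _ = ∑ k, u k * (∑ j ∈ T, R k j) := by
            apply Finset.sum_congr rfl; intro k _; rw [Finset.mul_sum]
    have h2 : ∑ k, u k * (∑ j ∈ T, R k j)
        = ∑ k ∈ T, u k * (∑ j ∈ T, R k j) + ∑ k ∈ Tᶜ, u k * (∑ j ∈ T, R k j) :=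
      (Finset.sum_add_sum_compl T _).symm
    have h3 : ∑ k ∈ T, u k * (∑ j ∈ T, R k j) = ∑ k ∈ T, u k := by
      apply Finset.sum_congr rfl
      intro k hk
      rw [Trowsum k hk, mul_one]
    rw [h1, h2, h3] at *
    linarith [h1]
  have mass' : ∀ k ∈ Tᶜ, u k * (∑ j ∈ T, R k j) = 0 := by
    intro k hk
    have hnn : ∀ k ∈ Tᶜ, 0 ≤ u k * (∑ j ∈ T, R k j) := fun k _ =>
      mul_nonneg (hu_nonneg k) (Finset.sum_nonneg fun j _ => hRnonneg k j)
    exact (Finset.sum_eq_zero_iff_of_nonneg hnn).mp mass k hk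
  intro i
  constructor
  · -- 0 < u i → root
    intro hui
    by_contra hiT
    rw [← hmemT, ← Finset.mem_compl] at hiT
    -- path from i to r in E
    have hpath : Relation.ReflTransGen E i r := ((root_iff r).mp hr) i
    -- find crossing edge
    have cross : ∀ a, Relation.ReflTransGen E a r → 0 < u a → a ∈ Tᶜ →
        ∃ a' ∈ Tᶜ, 0 < u a' ∧ ∃ b' ∈ T, 0 < R a' b' := by
      intro a h
      induction h using Relation.ReflTransGen.head_induction_on with
      | refl =>
          intro _ haT
          exact absurd hrT (Finset.mem_compl.mp haT)
      | head hac hcb ih =>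
          rename_i a c
          intro hua haT
          by_cases hcT : c ∈ T
          · exact ⟨a, haT, hua, c, hcT, hac⟩
          · exact ih (supp_fwd R hRnonneg u hu_nonneg hu_eig hua hac)
              (Finset.mem_compl.mpr hcT)
    obtain ⟨a', ha'T, hua', b', hb'T, hedge⟩ := cross i hpath hui hiT
    have hz := mass' a' ha'T
    have hcpos : 0 < ∑ j ∈ T, R a' j :=
      lt_of_lt_of_le hedge (Finset.single_le_sum (fun j _ => hRnonneg a' j) hb'T)
    nlinarith [hua', hcpos]
  · -- root → 0 < u i
    intro hi
    obtain ⟨k, hk⟩ : ∃ k, 0 < u k := by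
      by_contra h
      push_neg at h
      have : ∑ i, u i ≤ 0 := Finset.sum_nonpos (fun k _ => h k)
      linarith
    exact supp_path R hRnonneg u hu_nonneg hu_eig ((root_iff i).mp hi k) hk

/-- For nonnegative row-stochastic `R` and column-stochastic `C` with nonempty
root sets `𝓡_R` and `𝓡_{Cᵀ}`, and eigenvectors `u, v` as in the Push-Pull setup,
`𝓡_R ∩ 𝓡_{Cᵀ} ≠ ∅ ↔ uᵀv > 0`. -/
theorem push_pull_stmt7 (n : ℕ)
    (R C : Matrix (Fin n) (Fin n) ℝ)
    (hRnonneg : ∀ i j, 0 ≤ R i j)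
    (hRrow : R.mulVec (fun _ => (1 : ℝ)) = fun _ => (1 : ℝ))
    (hCnonneg : ∀ i j, 0 ≤ C i j)
    (hCcol : Matrix.vecMul (fun _ => (1 : ℝ)) C = fun _ => (1 : ℝ))
    (hRroot : ∃ r, R.IsGraphRoot r)
    (hCroot : ∃ r, C.transpose.IsGraphRoot r)
    (u : Fin n → ℝ) (hu_nonneg : ∀ i, 0 ≤ u i)
    (hu_eig : Matrix.vecMul u R = u) (hu_sum : ∑ i, u i = (n : ℝ))
    (v : Fin n → ℝ) (hv_nonneg : ∀ i, 0 ≤ v i)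
    (hv_eig : C.mulVec v = v) (hv_sum : ∑ i, v i = (n : ℝ)) :
    (∃ r, R.IsGraphRoot r ∧ C.transpose.IsGraphRoot r) ↔ 0 < ∑ i, u i * v i := by
  obtain ⟨r0, -⟩ := id hRroot
  have hn : 0 < (n : ℝ) := by exact_mod_cast r0.pos
  have hCt_nonneg : ∀ i j, 0 ≤ C.transpose i j := fun i j => hCnonneg j i
  have hCt_row : C.transpose.mulVec (fun _ => (1 : ℝ)) = fun _ => (1 : ℝ) := by
    rw [Matrix.mulVec_transpose]; exact hCcol
  have hv_eig' : Matrix.vecMul v C.transpose = v := by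
    rw [Matrix.vecMul_transpose]; exact hv_eig
  have keyR := key R hRnonneg hRrow hRroot u hu_nonneg hu_eig (by rw [hu_sum]; exact hn)
  have keyC := key C.transpose hCt_nonneg hCt_row hCroot v hv_nonneg hv_eig'
    (by rw [hv_sum]; exact hn)
  constructor
  · rintro ⟨r, h1, h2⟩
    have hur : 0 < u r := (keyR r).mpr h1
    have hvr : 0 < v r := (keyC r).mpr h2
    have : u r * v r ≤ ∑ i, u i * v i :=
      Finset.single_le_sum (fun i _ => mul_nonneg (hu_nonneg i) (hv_nonneg i))
        (Finset.mem_univ r)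
    nlinarith
  · intro hpos
    obtain ⟨i, hi⟩ : ∃ i, 0 < u i * v i := by
      by_contra h
      push_neg at h
      have : ∑ i, u i * v i ≤ 0 := Finset.sum_nonpos (fun i _ => h i)
      linarith
    have hui : 0 < u i := by
      rcases (hu_nonneg i).lt_or_eq with h | h
      · exact h
      · rw [← h] at hi; simp at hi
    have hvi : 0 < v i := by
      rcases (hv_nonneg i).lt_or_eq with h | h
      · exact h
      · rw [← h] at hi; simp at hi
    exact ⟨i, (keyR i).mp hui, (keyC i).mp hvi⟩
end

section
/- Let R ∈ ℝ^{n×n} be a nonnegative row-stochastic matrix (R·1 = 1) with R_{ii} > 0 for all i, and suppose the root set 𝓡_R of the directed graph 𝓖_R induced by R is nonempty (i.e., 𝓖_R contains a directed spanning tree). Let u ∈ ℝⁿ be a nonnegative vector with uᵀR = uᵀ and uᵀ1 = n. Then every eigenvalue λ ∈ ℂ of the matrix R − (1/n)·1uᵀ (regarded as a complex matrix) satisfies |λ| < 1; that is, the spectral radius ρ_R of R − (1/n)·1uᵀ is strictly smaller than 1. -/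
open Finset

lemma pullback_aux {n : ℕ} (R : Matrix (Fin n) (Fin n) ℝ)
    (S : Set (Fin n)) (hS : ∀ i ∈ S, ∀ j, 0 < R i j → j ∈ S)
    {r i : Fin n} (h : Relation.ReflTransGen (fun a b : Fin n => 0 < R b a) r i) :
    i ∈ S → r ∈ S := by
  induction h with
  | refl => exact fun h => h
  | tail _ hstep ih => exact fun hc => ih (hS _ hc _ hstep)

lemma real_const_aux {n : ℕ} (R : Matrix (Fin n) (Fin n) ℝ)
    (hRnonneg : ∀ i j, 0 ≤ R i j)
    (hrow : ∀ i, ∑ j, R i j = 1)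
    {r : Fin n} (hr : ∀ i : Fin n, Relation.ReflTransGen (fun a b : Fin n => 0 < R b a) r i)
    (x : Fin n → ℝ) (hx : ∀ i, ∑ j, R i j * x j = x i) :
    ∀ i, x i = x r := by
  intro i
  have key : ∀ (y : Fin n → ℝ), (∀ i, ∑ j, R i j * y j = y i) →
      ∀ i, (∀ k, y k ≤ y i) → ∀ j, 0 < R i j → y j = y i := by
    intro y hy i hi j hj
    have hsum : ∑ j, R i j * (y i - y j) = 0 := by
      simp only [mul_sub]
      rw [Finset.sum_sub_distrib, ← Finset.sum_mul, hrow i, hy i]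
      ring
    have hterm := (Finset.sum_eq_zero_iff_of_nonneg (fun j _ =>
      mul_nonneg (hRnonneg i j) (sub_nonneg.2 (hi j)))).1 hsum j (Finset.mem_univ j)
    have := (mul_eq_zero.1 hterm).resolve_left (ne_of_gt hj)
    linarith
  have hne : (Finset.univ : Finset (Fin n)).Nonempty := ⟨i, Finset.mem_univ i⟩
  obtain ⟨imax, -, hmax⟩ := Finset.exists_max_image Finset.univ x hne
  obtain ⟨imin, -, hmin⟩ := Finset.exists_min_image Finset.univ x hne
  have hmax' : ∀ k, x k ≤ x imax := fun k => hmax k (Finset.mem_univ k)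
  have hmin' : ∀ k, x imin ≤ x k := fun k => hmin k (Finset.mem_univ k)
  have hrmax : r ∈ {i : Fin n | ∀ k, x k ≤ x i} := by
    refine pullback_aux R _ ?_ (hr imax) hmax'
    intro a ha j hj k
    have := key x hx a ha j hj
    rw [this]; exact ha k
  have hrmin : r ∈ {i : Fin n | ∀ k, x i ≤ x k} := by
    refine pullback_aux R _ ?_ (hr imin) hmin'
    intro a ha j hj k
    have hy : ∀ i, ∑ j, R i j * (-x) j = (-x) i := by
      intro i
      simp only [Pi.neg_apply, mul_neg]
      rw [Finset.sum_neg_distrib, hx i]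
    have := key (-x) hy a (fun k => neg_le_neg (ha k)) j hj
    have := neg_injective this
    rw [this]; exact ha k
  exact le_antisymm (hrmax i) (hrmin i)



/-- For a nonnegative row-stochastic matrix `R` with positive diagonal and
nonempty root set, and left eigenvector `u ≥ 0` with `uᵀR = uᵀ`, `uᵀ1 = n`, every complex
eigenvalue `λ` of `R − (1/n)·1uᵀ` satisfies `|λ| < 1`. -/
theorem push_pull_stmt8 (n : ℕ)
    (R : Matrix (Fin n) (Fin n) ℝ)
    (hRnonneg : ∀ i j, 0 ≤ R i j)
    (hRrow : R.mulVec (fun _ => (1 : ℝ)) = fun _ => (1 : ℝ))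
    (hRdiag : ∀ i, 0 < R i i)
    (hroot : ∃ r, R.IsGraphRoot r)
    (u : Fin n → ℝ) (hu_nonneg : ∀ i, 0 ≤ u i)
    (hu_eig : Matrix.vecMul u R = u) (hu_sum : ∑ i, u i = (n : ℝ)) :
    ∀ (lam : ℂ) (z : Fin n → ℂ), z ≠ 0 →
      ((R - Matrix.of fun i j => u j / n).map (Complex.ofReal)).mulVec z = lam • z →
      ‖lam‖ < 1 := by
  intro lam z hz hev
  by_contra hcon
  push_neg at hcon
  obtain ⟨r, hr⟩ := hroot
  obtain ⟨k0, hk0⟩ : ∃ k, z k ≠ 0 := by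
    by_contra h; push_neg at h; exact hz (funext h)
  have hn : 0 < n := Fin.pos k0
  have hnC : (n : ℂ) ≠ 0 := Nat.cast_ne_zero.mpr hn.ne'
  have hrow : ∀ i, ∑ j, R i j = 1 := by
    intro i
    have := congrFun hRrow i
    simpa [Matrix.mulVec, dotProduct] using this
  -- pointwise eigen equation
  have hev' : ∀ i, ∑ j, ((R i j : ℂ) - (u j : ℂ) / (n : ℂ)) * z j = lam * z i := by
    intro i
    have h := congrFun hev i
    simp only [Matrix.mulVec, dotProduct, Matrix.map_apply, Matrix.sub_apply,
      Matrix.of_apply, Pi.smul_apply, smul_eq_mul] at h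
    push_cast at h
    exact h
  set s : ℂ := ∑ j, (u j : ℂ) * z j with hs
  have hlam0 : lam ≠ 0 := by
    intro h; rw [h] at hcon; simp at hcon; linarith
  have hcol : ∀ j, ∑ i, (u i : ℂ) * (R i j : ℂ) = (u j : ℂ) := by
    intro j
    have h := congrFun hu_eig j
    have hreal : ∑ i, u i * R i j = u j := by
      simpa [Matrix.vecMul, dotProduct] using h
    have hc : ((∑ i, u i * R i j : ℝ) : ℂ) = ∑ i, (u i : ℂ) * (R i j : ℂ) := by
      push_cast; rfl
    rw [← hc, hreal]
  have husumC : ∑ i, (u i : ℂ) = (n : ℂ) := by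
    have : ((∑ i, u i : ℝ) : ℂ) = ((n : ℝ) : ℂ) := by exact_mod_cast congrArg Complex.ofReal hu_sum
    push_cast at this
    exact this
  have hinner : ∀ j : Fin n, ∑ i, (u i : ℂ) * ((R i j : ℂ) - (u j : ℂ) / n) = 0 := by
    intro j
    simp only [mul_sub]
    rw [Finset.sum_sub_distrib, hcol j, ← Finset.sum_mul, husumC]
    field_simp
    ring
  have h2 : ∑ i, (u i : ℂ) * (lam * z i) = 0 := by
    calc ∑ i, (u i : ℂ) * (lam * z i)
        = ∑ i, (u i : ℂ) * (∑ j, ((R i j : ℂ) - (u j : ℂ) / n) * z j) :=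
          Finset.sum_congr rfl fun i _ => by rw [hev' i]
      _ = ∑ i, ∑ j, (u i : ℂ) * (((R i j : ℂ) - (u j : ℂ) / n) * z j) :=
          Finset.sum_congr rfl fun i _ => Finset.mul_sum _ _ _
      _ = ∑ j, ∑ i, (u i : ℂ) * (((R i j : ℂ) - (u j : ℂ) / n) * z j) := Finset.sum_comm
      _ = ∑ j, (∑ i, (u i : ℂ) * ((R i j : ℂ) - (u j : ℂ) / n)) * z j := by
          refine Finset.sum_congr rfl fun j _ => ?_
          rw [Finset.sum_mul]
          exact Finset.sum_congr rfl fun i _ => by ring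
      _ = 0 := by
          refine Finset.sum_eq_zero fun j _ => ?_
          rw [hinner j, zero_mul]
  have hs0 : s = 0 := by
    have h1 : lam * s = 0 := by
      rw [hs, Finset.mul_sum, ← h2]
      exact Finset.sum_congr rfl fun i _ => by ring
    exact (mul_eq_zero.1 h1).resolve_left hlam0
  have hRz : ∀ i, ∑ j, (R i j : ℂ) * z j = lam * z i := by
    intro i
    have h := hev' i
    have hsplit : ∑ j, ((R i j : ℂ) - (u j : ℂ) / n) * z j
        = (∑ j, (R i j : ℂ) * z j) - s / n := by
      simp only [sub_mul]
      rw [Finset.sum_sub_distrib]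
      congr 1
      rw [hs, Finset.sum_div]
      exact Finset.sum_congr rfl fun j _ => by ring
    rw [hsplit, hs0] at h
    simpa using h
  obtain ⟨i0, -, hmax⟩ := Finset.exists_max_image Finset.univ (fun k => ‖z k‖)
    ⟨k0, Finset.mem_univ k0⟩
  have hmax' : ∀ k, ‖z k‖ ≤ ‖z i0‖ := fun k => hmax k (Finset.mem_univ k)
  set M := ‖z i0‖ with hM
  have hMpos : 0 < M := lt_of_lt_of_le (norm_pos_iff.mpr hk0) (hmax' k0)
  have hbound : ‖lam‖ * M ≤ M := by
    calc ‖lam‖ * M = ‖lam * z i0‖ := (norm_mul _ _).symm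
      _ = ‖∑ j, (R i0 j : ℂ) * z j‖ := by rw [hRz i0]
      _ ≤ ∑ j, ‖(R i0 j : ℂ) * z j‖ := norm_sum_le _ _
      _ = ∑ j, R i0 j * ‖z j‖ := by
          refine Finset.sum_congr rfl fun j _ => ?_
          rw [norm_mul, Complex.norm_real, Real.norm_eq_abs, abs_of_nonneg (hRnonneg i0 j)]
      _ ≤ ∑ j, R i0 j * M :=
          Finset.sum_le_sum fun j _ => mul_le_mul_of_nonneg_left (hmax' j) (hRnonneg i0 j)
      _ = M := by rw [← Finset.sum_mul, hrow i0, one_mul]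
  have habs : ‖lam‖ = 1 := by
    have hle : ‖lam‖ ≤ 1 := by nlinarith [hbound, hMpos]
    linarith
  -- alignment at i0
  set c : ℂ := (starRingEnd ℂ) (lam * z i0) with hc
  have hcabs : ‖c‖ = M := by
    rw [hc, Complex.norm_conj, norm_mul, habs, one_mul]
  have hprod : (lam * z i0) * c = ((M ^ 2 : ℝ) : ℂ) := by
    rw [hc, Complex.mul_conj]
    congr 1
    rw [Complex.normSq_eq_norm_sq, norm_mul, habs, one_mul]
  have hre : ∑ j, R i0 j * ((z j * c).re) = M ^ 2 := by
    have h1 : ((∑ j, (R i0 j : ℂ) * z j) * c).re = M ^ 2 := by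
      rw [hRz i0, hprod, Complex.ofReal_re]
    rw [← h1, Finset.sum_mul, Complex.re_sum]
    refine Finset.sum_congr rfl fun j _ => ?_
    rw [mul_assoc]
    simp [Complex.mul_re]
  have hzero : ∑ j, R i0 j * (M ^ 2 - (z j * c).re) = 0 := by
    simp only [mul_sub]
    rw [Finset.sum_sub_distrib, ← Finset.sum_mul, hrow i0, hre]
    ring
  have hterm_nonneg : ∀ j ∈ Finset.univ, 0 ≤ R i0 j * (M ^ 2 - (z j * c).re) := by
    intro j _
    refine mul_nonneg (hRnonneg i0 j) (sub_nonneg.2 ?_)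
    calc (z j * c).re ≤ ‖z j * c‖ := Complex.re_le_norm _
      _ = ‖z j‖ * M := by rw [norm_mul, hcabs]
      _ ≤ M * M := mul_le_mul_of_nonneg_right (hmax' j) hMpos.le
      _ = M ^ 2 := (sq M).symm
  have hii := (Finset.sum_eq_zero_iff_of_nonneg hterm_nonneg).1 hzero i0 (Finset.mem_univ i0)
  have hre_i0 : (z i0 * c).re = M ^ 2 := by
    have := (mul_eq_zero.1 hii).resolve_left (ne_of_gt (hRdiag i0))
    linarith
  have habs_i0 : ‖z i0 * c‖ = M ^ 2 := by
    rw [norm_mul, hcabs, ← hM, sq]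
  have him : (z i0 * c).im = 0 := by
    have h1 : Complex.normSq (z i0 * c) = (M ^ 2) ^ 2 := by
      rw [Complex.normSq_eq_norm_sq, habs_i0]
    have h2 := Complex.normSq_apply (z i0 * c)
    have h3 : (z i0 * c).im * (z i0 * c).im = 0 := by nlinarith [hre_i0, h1, h2]
    exact mul_self_eq_zero.mp h3
  have hzc : z i0 * c = ((M ^ 2 : ℝ) : ℂ) := by
    apply Complex.ext
    · rw [hre_i0, Complex.ofReal_re]
    · rw [him, Complex.ofReal_im]
  have hc0 : c ≠ 0 := by
    intro h
    rw [h, norm_zero] at hcabs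
    exact hMpos.ne' hcabs.symm
  have hfix : z i0 = lam * z i0 := by
    have h1 : (z i0 - lam * z i0) * c = 0 := by rw [sub_mul, hzc, hprod, sub_self]
    have := (mul_eq_zero.1 h1).resolve_right hc0
    exact sub_eq_zero.mp this
  have hzi0 : z i0 ≠ 0 := by
    intro h
    rw [hM, h, norm_zero] at hMpos
    exact lt_irrefl _ hMpos
  have hlam1 : lam = 1 := by
    have h1 : (1 - lam) * z i0 = 0 := by
      rw [sub_mul, one_mul, ← hfix, sub_self]
    have := (mul_eq_zero.1 h1).resolve_right hzi0
    exact (sub_eq_zero.mp this).symm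
  have hRz1 : ∀ i, ∑ j, (R i j : ℂ) * z j = z i := by
    intro i
    rw [hRz i, hlam1, one_mul]
  have hxre : ∀ i, ∑ j, R i j * (z j).re = (z i).re := by
    intro i
    have h := congrArg Complex.re (hRz1 i)
    rw [Complex.re_sum] at h
    rw [← h]
    refine Finset.sum_congr rfl fun j _ => ?_
    simp [Complex.mul_re]
  have hxim : ∀ i, ∑ j, R i j * (z j).im = (z i).im := by
    intro i
    have h := congrArg Complex.im (hRz1 i)
    rw [Complex.im_sum] at h
    rw [← h]
    refine Finset.sum_congr rfl fun j _ => ?_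
    simp [Complex.mul_im]
  have hconst : ∀ i, z i = z r := by
    intro i
    apply Complex.ext
    · exact real_const_aux R hRnonneg hrow hr _ hxre i
    · exact real_const_aux R hRnonneg hrow hr _ hxim i
  have hsn : s = (n : ℂ) * z r := by
    rw [hs]
    calc ∑ j, (u j : ℂ) * z j = ∑ j, (u j : ℂ) * z r :=
          Finset.sum_congr rfl fun j _ => by rw [hconst j]
      _ = (∑ j, (u j : ℂ)) * z r := (Finset.sum_mul _ _ _).symm
      _ = (n : ℂ) * z r := by rw [husumC]
  have hzr : z r = 0 := by
    rw [hs0] at hsn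
    exact (mul_eq_zero.1 hsn.symm).resolve_left hnC
  exact hz (funext fun i => by rw [hconst i, hzr]; rfl)
end

section
/- Let C ∈ ℝ^{n×n} be a nonnegative column-stochastic matrix (1ᵀC = 1ᵀ) with C_{ii} > 0 for all i, and suppose the root set 𝓡_{Cᵀ} of the directed graph 𝓖_{Cᵀ} induced by Cᵀ is nonempty (i.e., 𝓖_{Cᵀ} contains a directed spanning tree). Let v ∈ ℝⁿ be a nonnegative vector with Cv = v and 1ᵀv = n. Then every eigenvalue λ ∈ ℂ of the matrix C − (1/n)·v1ᵀ (regarded as a complex matrix) satisfies |λ| < 1; that is, the spectral radius ρ_C of C − (1/n)·v1ᵀ is strictly smaller than 1. -/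
open Finset


/-- If `y ≥ 0` is a nonzero eigenvector of `C` for eigenvalue 1 (nonneg `C`), and `r` is a root
of the graph of `Cᵀ`, then `y r > 0`. -/
lemma aux_root_pos {n : ℕ} (C : Matrix (Fin n) (Fin n) ℝ)
    (hCnonneg : ∀ i j, 0 ≤ C i j) {r : Fin n}
    (hr : C.transpose.IsGraphRoot r)
    (y : Fin n → ℝ) (hy : ∀ i, 0 ≤ y i) (heig : C.mulVec y = y) (hy0 : y ≠ 0) :
    0 < y r := by
  have step : ∀ i j : Fin n, 0 < C i j → 0 < y j → 0 < y i := by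
    intro i j hC hyj
    have h1 : C i j * y j ≤ ∑ k, C i k * y k := by
      apply Finset.single_le_sum (fun k _ => mul_nonneg (hCnonneg i k) (hy k)) (mem_univ j)
    have h2 : (∑ k, C i k * y k) = y i := by
      have := congrFun heig i
      simpa [Matrix.mulVec, dotProduct] using this
    have : 0 < C i j * y j := mul_pos hC hyj
    linarith
  obtain ⟨j, hj⟩ : ∃ j, y j ≠ 0 := by
    by_contra h
    push_neg at h
    exact hy0 (funext fun i => h i)
  have hyj : 0 < y j := lt_of_le_of_ne (hy j) (Ne.symm hj)
  have key : ∀ a b : Fin n, Relation.ReflTransGen (fun a b : Fin n => 0 < C.transpose b a) a b →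
      0 < y b → 0 < y a := by
    intro a b hab
    induction hab with
    | refl => exact id
    | tail p e ih =>
      intro hc
      exact ih (step _ _ e hc)
  exact key r j (hr j) hyj

/-- The real kernel of `C - I` is spanned by `v`. -/
lemma aux_real_ker {n : ℕ} (C : Matrix (Fin n) (Fin n) ℝ)
    (hCnonneg : ∀ i j, 0 ≤ C i j)
    (hCcol : Matrix.vecMul (fun _ => (1 : ℝ)) C = fun _ => (1 : ℝ))
    {r : Fin n} (hr : C.transpose.IsGraphRoot r)
    (v : Fin n → ℝ) (hv_nonneg : ∀ i, 0 ≤ v i)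
    (hv_eig : C.mulVec v = v) (hvr : 0 < v r)
    (x : Fin n → ℝ) (hx : C.mulVec x = x) :
    ∃ t : ℝ, x = t • v := by
  have hcol : ∀ j, ∑ i, C i j = 1 := by
    intro j
    have := congrFun hCcol j
    simpa [Matrix.vecMul, dotProduct] using this
  set t : ℝ := x r / v r with ht
  refine ⟨t, ?_⟩
  set w : Fin n → ℝ := fun i => x i - t * v i with hw
  have hweig : ∀ i, ∑ j, C i j * w j = w i := by
    intro i
    have h1 : ∑ j, C i j * x j = x i := by
      have := congrFun hx i; simpa [Matrix.mulVec, dotProduct] using this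
    have h2 : ∑ j, C i j * v j = v i := by
      have := congrFun hv_eig i; simpa [Matrix.mulVec, dotProduct] using this
    have : ∑ j, C i j * (x j - t * v j) = (∑ j, C i j * x j) - t * ∑ j, C i j * v j := by
      rw [Finset.mul_sum]
      rw [← Finset.sum_sub_distrib]
      refine Finset.sum_congr rfl fun j _ => by ring
    simp only [hw]
    rw [this, h1, h2]
  have hwr : w r = 0 := by
    simp [hw, ht, div_mul_cancel₀ _ (ne_of_gt hvr)]
  -- u = |w| is a nonneg eigenvector
  set u : Fin n → ℝ := fun i => |w i| with hu
  have hle : ∀ i, u i ≤ ∑ j, C i j * u j := by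
    intro i
    calc u i = |∑ j, C i j * w j| := by rw [hweig i]
    _ ≤ ∑ j, |C i j * w j| := Finset.abs_sum_le_sum_abs _ _
    _ = ∑ j, C i j * u j := by
        refine Finset.sum_congr rfl fun j _ => ?_
        rw [abs_mul, abs_of_nonneg (hCnonneg i j)]
  have hsums : ∑ i, (∑ j, C i j * u j) = ∑ i, u i := by
    rw [Finset.sum_comm]
    refine Finset.sum_congr rfl fun j _ => ?_
    rw [← Finset.sum_mul, hcol j, one_mul]
  have heq : ∀ i, (∑ j, C i j * u j) = u i := by
    have h := (Finset.sum_eq_sum_iff_of_le (fun i _ => hle i)).mp hsums.symm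
    intro i
    exact (h i (mem_univ i)).symm
  have hueig : C.mulVec u = u := by
    funext i
    simpa [Matrix.mulVec, dotProduct] using heq i
  have hu0 : u = 0 := by
    by_contra h
    have h2 : (0:ℝ) < |w r| := aux_root_pos C hCnonneg hr u (fun i => abs_nonneg _) hueig h
    rw [hwr] at h2
    simp at h2
  funext i
  have : |w i| = 0 := congrFun hu0 i
  have : w i = 0 := abs_eq_zero.mp this
  have : x i - t * v i = 0 := this
  simp [Pi.smul_apply, smul_eq_mul]
  linarith

/-- For a nonnegative column-stochastic matrix `C` with positive diagonal and
nonempty root set of `𝓖_{Cᵀ}`, and right eigenvector `v ≥ 0` with `Cv = v`, `1ᵀv = n`, every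
complex eigenvalue `λ` of `C − (1/n)·v1ᵀ` satisfies `|λ| < 1`. -/
theorem push_pull_stmt9 (n : ℕ)
    (C : Matrix (Fin n) (Fin n) ℝ)
    (hCnonneg : ∀ i j, 0 ≤ C i j)
    (hCcol : Matrix.vecMul (fun _ => (1 : ℝ)) C = fun _ => (1 : ℝ))
    (hCdiag : ∀ i, 0 < C i i)
    (hroot : ∃ r, C.transpose.IsGraphRoot r)
    (v : Fin n → ℝ) (hv_nonneg : ∀ i, 0 ≤ v i)
    (hv_eig : C.mulVec v = v) (hv_sum : ∑ i, v i = (n : ℝ)) :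
    ∀ (lam : ℂ) (z : Fin n → ℂ), z ≠ 0 →
      ((C - Matrix.of fun i j => v i / n).map (Complex.ofReal)).mulVec z = lam • z →
      ‖lam‖ < 1 := by
  intro lam z hz hzeig
  obtain ⟨r, hr⟩ := hroot
  -- n > 0
  obtain ⟨i₀, hi₀⟩ : ∃ i, z i ≠ 0 := by
    by_contra h; push_neg at h; exact hz (funext h)
  have hn : (0:ℝ) < n := by
    exact_mod_cast Fin.pos i₀
  have hnne : (n:ℝ) ≠ 0 := ne_of_gt hn
  have hcol : ∀ j, ∑ i, C i j = 1 := by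
    intro j
    have := congrFun hCcol j
    simpa [Matrix.vecMul, dotProduct] using this
  -- the eigen equation, componentwise
  have heig : ∀ i, (∑ j, ((C i j : ℂ) - ((v i / n : ℝ) : ℂ)) * z j) = lam * z i := by
    intro i
    have := congrFun hzeig i
    simpa [Matrix.mulVec, dotProduct, Matrix.map_apply, Matrix.sub_apply,
      Matrix.of_apply, Complex.ofReal_sub] using this
  -- sum over i: lam * (∑ z) = 0
  set S : ℂ := ∑ i, z i with hS
  have hlamS : lam * S = 0 := by
    have h1 : ∑ i, (∑ j, ((C i j : ℂ) - ((v i / n : ℝ) : ℂ)) * z j) = ∑ i, lam * z i :=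
      Finset.sum_congr rfl fun i _ => heig i
    rw [← Finset.mul_sum] at h1
    rw [← h1, Finset.sum_comm]
    have : ∀ j, (∑ i, ((C i j : ℂ) - ((v i / n : ℝ) : ℂ)) * z j) = 0 := by
      intro j
      rw [← Finset.sum_mul]
      have : (∑ i, ((C i j : ℂ) - ((v i / n : ℝ) : ℂ))) = 0 := by
        rw [Finset.sum_sub_distrib]
        have e1 : (∑ i, (C i j : ℂ)) = ((∑ i, C i j : ℝ) : ℂ) := by push_cast; ring
        have e2 : (∑ i, ((v i / n : ℝ) : ℂ)) = ((∑ i, v i / n : ℝ) : ℂ) := by push_cast; ring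
        rw [e1, e2, hcol j]
        rw [← Finset.sum_div, hv_sum, div_self hnne]
        simp
      rw [this, zero_mul]
    push_cast at this ⊢
    exact Finset.sum_eq_zero fun j _ => this j
  rcases mul_eq_zero.mp hlamS with hlam0 | hS0
  · rw [hlam0]; simp
  -- now S = 0, so z is an eigenvector of C itself
  have heigC : ∀ i, (∑ j, (C i j : ℂ) * z j) = lam * z i := by
    intro i
    have h1 := heig i
    have h2 : ∑ j, ((C i j : ℂ) - ((v i / n : ℝ) : ℂ)) * z j
        = (∑ j, (C i j : ℂ) * z j) - ((v i / n : ℝ) : ℂ) * S := by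
      rw [hS, Finset.mul_sum, ← Finset.sum_sub_distrib]
      refine Finset.sum_congr rfl fun j _ => by ring
    rw [h2, hS0] at h1
    simpa using h1
  -- ℓ¹ estimates
  set N : ℝ := ∑ i, ‖z i‖ with hN
  have hNpos : 0 < N := by
    have : 0 < ‖z i₀‖ := by simpa using hi₀
    have hle : ‖z i₀‖ ≤ N :=
      Finset.single_le_sum (fun i _ => norm_nonneg _) (mem_univ i₀)
    linarith
  have hrowle : ∀ i, ‖lam‖ * ‖z i‖ ≤ ∑ j, C i j * ‖z j‖ := by
    intro i
    rw [← norm_mul, ← heigC i]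
    calc ‖∑ j, (C i j : ℂ) * z j‖ ≤ ∑ j, ‖(C i j : ℂ) * z j‖ :=
          norm_sum_le _ _
    _ = ∑ j, C i j * ‖z j‖ := by
          refine Finset.sum_congr rfl fun j _ => ?_
          rw [norm_mul, Complex.norm_real, Real.norm_eq_abs, abs_of_nonneg (hCnonneg i j)]
  have hsumboth : ∑ i, (∑ j, C i j * ‖z j‖) = N := by
    rw [Finset.sum_comm, hN]
    refine Finset.sum_congr rfl fun j _ => ?_
    rw [← Finset.sum_mul, hcol j, one_mul]
  have habsle : ‖lam‖ ≤ 1 := by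
    have h1 : ∑ i, ‖lam‖ * ‖z i‖ ≤ N := by
      rw [← hsumboth]
      exact Finset.sum_le_sum fun i _ => hrowle i
    rw [← Finset.mul_sum, ← hN] at h1
    nlinarith
  rcases lt_or_eq_of_le habsle with h | habs1
  · exact h
  -- |lam| = 1 : derive contradiction
  exfalso
  have hroweq : ∀ i, ‖lam‖ * ‖z i‖ = ∑ j, C i j * ‖z j‖ := by
    have h1 : ∑ i, ‖lam‖ * ‖z i‖ = ∑ i, (∑ j, C i j * ‖z j‖) := by
      rw [hsumboth, ← Finset.mul_sum, ← hN, habs1, one_mul]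
    have := (Finset.sum_eq_sum_iff_of_le (fun i _ => hrowle i)).mp h1
    exact fun i => this i (mem_univ i)
  -- show lam = 1 using the diagonal
  have hlam1 : lam = 1 := by
    set a : ℂ := (C i₀ i₀ : ℂ) * z i₀ with ha
    set b : ℂ := ∑ j ∈ univ.erase i₀, (C i₀ j : ℂ) * z j with hb
    have hab : a + b = lam * z i₀ := by
      rw [← heigC i₀, ha, hb, ← Finset.add_sum_erase _ _ (mem_univ i₀)]
    have habsb : ‖b‖ ≤ ∑ j ∈ univ.erase i₀, C i₀ j * ‖z j‖ := by
      calc ‖b‖ ≤ ∑ j ∈ univ.erase i₀, ‖(C i₀ j : ℂ) * z j‖ :=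
            norm_sum_le _ _
      _ = ∑ j ∈ univ.erase i₀, C i₀ j * ‖z j‖ := by
            refine Finset.sum_congr rfl fun j _ => ?_
            rw [norm_mul, Complex.norm_real, Real.norm_eq_abs, abs_of_nonneg (hCnonneg i₀ j)]
    have hsplit : ∑ j, C i₀ j * ‖z j‖
        = C i₀ i₀ * ‖z i₀‖ + ∑ j ∈ univ.erase i₀, C i₀ j * ‖z j‖ :=
      (Finset.add_sum_erase _ _ (mem_univ i₀)).symm
    have habsa : ‖a‖ = C i₀ i₀ * ‖z i₀‖ := by
      rw [ha, norm_mul, Complex.norm_real, Real.norm_eq_abs, abs_of_nonneg (le_of_lt (hCdiag i₀))]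
    have heq1 : ‖a + b‖ = ‖lam‖ * ‖z i₀‖ := by
      rw [hab, norm_mul]
    have hge : ‖a‖ + ‖b‖ ≤ ‖a + b‖ := by
      rw [heq1, hroweq i₀, hsplit, habsa]
      linarith
    have heqn : ‖a + b‖ = ‖a‖ + ‖b‖ :=
      le_antisymm (norm_add_le a b) hge
    have hsr : SameRay ℝ a b := by
      rw [sameRay_iff_norm_add]
      simpa using heqn
    have ha0 : a ≠ 0 := by
      rw [ha]
      exact mul_ne_zero (by exact_mod_cast ne_of_gt (hCdiag i₀)) hi₀
    obtain ⟨t, ht0, htb⟩ := hsr.exists_nonneg_left ha0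
    have hlz : lam * z i₀ = (((1 + t) * C i₀ i₀ : ℝ) : ℂ) * z i₀ := by
      rw [← hab, ← htb, ha, Complex.real_smul]
      push_cast
      ring
    have hlamval : lam = (((1 + t) * C i₀ i₀ : ℝ) : ℂ) :=
      mul_right_cancel₀ hi₀ hlz
    have habs : ‖lam‖ = (1 + t) * C i₀ i₀ := by
      rw [hlamval, Complex.norm_real, Real.norm_eq_abs,
        abs_of_nonneg (mul_nonneg (by linarith) (le_of_lt (hCdiag i₀)))]
    rw [habs] at habs1
    rw [hlamval]
    exact_mod_cast habs1
  -- lam = 1: z is in the (real) kernel of C - I, spanned by v, but 1ᵀ z = 0 forces z = 0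
  subst hlam1
  have hvr : 0 < v r := by
    refine aux_root_pos C hCnonneg hr v hv_nonneg hv_eig ?_
    intro h
    rw [h] at hv_sum
    simp at hv_sum
    exact hnne hv_sum.symm
  have hre : C.mulVec (fun i => (z i).re) = fun i => (z i).re := by
    funext i
    have h := heigC i
    rw [one_mul] at h
    have := congrArg Complex.re h
    simp only [Complex.re_sum] at this
    simpa [Matrix.mulVec, dotProduct, Complex.mul_re, Complex.ofReal_re,
      Complex.ofReal_im] using this
  have him : C.mulVec (fun i => (z i).im) = fun i => (z i).im := by
    funext i
    have h := heigC i
    rw [one_mul] at h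
    have := congrArg Complex.im h
    simp only [Complex.im_sum] at this
    simpa [Matrix.mulVec, dotProduct, Complex.mul_im, Complex.ofReal_re,
      Complex.ofReal_im] using this
  obtain ⟨ta, hta⟩ := aux_real_ker C hCnonneg hCcol hr v hv_nonneg hv_eig hvr _ hre
  obtain ⟨tb, htb⟩ := aux_real_ker C hCnonneg hCcol hr v hv_nonneg hv_eig hvr _ him
  have hS0' : (∑ i, z i) = 0 := hS0
  have hreS : ∑ i, (z i).re = 0 := by
    have := congrArg Complex.re hS0'
    simpa [Complex.re_sum] using this
  have himS : ∑ i, (z i).im = 0 := by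
    have := congrArg Complex.im hS0'
    simpa [Complex.im_sum] using this
  have hta0 : ta = 0 := by
    have : ∑ i, ta * v i = 0 := by
      rw [← hreS]
      exact (Finset.sum_congr rfl fun i _ => by rw [congrFun hta i]; rfl).symm
    rw [← Finset.mul_sum, hv_sum] at this
    rcases mul_eq_zero.mp this with h | h
    · exact h
    · exact absurd h hnne
  have htb0 : tb = 0 := by
    have : ∑ i, tb * v i = 0 := by
      rw [← himS]
      exact (Finset.sum_congr rfl fun i _ => by rw [congrFun htb i]; rfl).symm
    rw [← Finset.mul_sum, hv_sum] at this
    rcases mul_eq_zero.mp this with h | h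
    · exact h
    · exact absurd h hnne
  apply hi₀
  have h1 : (z i₀).re = 0 := by rw [congrFun hta i₀, hta0]; simp
  have h2 : (z i₀).im = 0 := by rw [congrFun htb i₀, htb0]; simp
  exact Complex.ext h1 h2
end

section
/- Let f₁,…,f_n : ℝᵖ → ℝ be differentiable, each μ-strongly convex with L-Lipschitz continuous gradient (0 < μ ≤ L), and let x* ∈ ℝ^{1×p} be the unique minimizer of f = Σ_{i=1}^n f_i. Let u, v ∈ ℝⁿ with uᵀ1 = n and 1ᵀv = n, let α > 0, and set α' := (α/n)·uᵀv; assume 0 ≤ α' ≤ 2/(μ + L). Let 𝐱_k, 𝐲_k ∈ ℝ^{n×p}, define x̄_k := (1/n)uᵀ𝐱_k and ȳ_k := (1/n)1ᵀ𝐲_k, and assume the gradient-tracking identity ȳ_k = (1/n)·Σ_{i=1}^n ∇f_i(x_{i,k})ᵀ holds (x_{i,k}ᵀ being the i-th row of 𝐱_k) and that x̄_{k+1} := x̄_k − (α/n)·uᵀ𝐲_k. Then ‖x̄_{k+1} − x*‖₂ ≤ (1 − α'μ)·‖x̄_k − x*‖₂ + (α'L/√n)·‖𝐱_k − 1x̄_k‖_F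 + (α‖u − 1‖₂/n)·‖𝐲_k − vȳ_k‖_F, where ‖·‖_F denotes the Frobenius norm on ℝ^{n×p}. -/
open scoped RealInnerProductSpace

variable {E : Type*} [NormedAddCommGroup E] [InnerProductSpace ℝ E] [CompleteSpace E]

lemma lineDeriv_aux (f : E → ℝ) (hf : Differentiable ℝ f) (a h : E) (t : ℝ) :
    HasDerivAt (fun s : ℝ => f (a + s • h)) ⟪gradient f (a + t • h), h⟫ t := by
  have hg : HasFDerivAt f (InnerProductSpace.toDual ℝ E (gradient f (a + t • h))) (a + t • h) :=
    hasGradientAt_iff_hasFDerivAt.1 (hf _).hasGradientAt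
  have hc : HasDerivAt (fun s : ℝ => a + s • h) h t := by
    simpa using ((hasDerivAt_id t).smul_const h).const_add a
  simpa [InnerProductSpace.toDual_apply_apply, Function.comp_def] using hg.comp_hasDerivAt t hc

lemma quad_deriv_aux (c d t : ℝ) : HasDerivAt (fun t : ℝ => c * t ^ 2 * d) (2 * c * t * d) t := by
  have : HasDerivAt (fun t : ℝ => c * t ^ 2 * d) (c * (2 * t ^ 1) * d) t :=
    ((hasDerivAt_pow 2 t).const_mul c).mul_const d
  convert this using 1; ring

lemma lower_bound_aux (f : E → ℝ) (hf : Differentiable ℝ f) (μ : ℝ)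
    (hsc : ∀ x x' : E, μ * ‖x - x'‖ ^ 2 ≤ ⟪gradient f x - gradient f x', x - x'⟫)
    (a b : E) : f a + ⟪gradient f a, b - a⟫ + μ / 2 * ‖b - a‖ ^ 2 ≤ f b := by
  set h := b - a with hh
  set ψ : ℝ → ℝ := fun t => f (a + t • h) - t * ⟪gradient f a, h⟫ - μ / 2 * t ^ 2 * ‖h‖ ^ 2 with hψ
  have hd : ∀ t : ℝ, HasDerivAt ψ
      (⟪gradient f (a + t • h), h⟫ - ⟪gradient f a, h⟫ - μ * t * ‖h‖ ^ 2) t := by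
    intro t
    have h1 := lineDeriv_aux f hf a h t
    have h2 : HasDerivAt (fun t : ℝ => t * ⟪gradient f a, h⟫) ⟪gradient f a, h⟫ t := by
      simpa using (hasDerivAt_id t).mul_const ⟪gradient f a, h⟫
    have h3 : HasDerivAt (fun t : ℝ => μ / 2 * t ^ 2 * ‖h‖ ^ 2) (μ * t * ‖h‖ ^ 2) t := by
      have := quad_deriv_aux (μ / 2) (‖h‖ ^ 2) t
      convert this using 1; ring
    simpa [hψ] using (h1.fun_sub h2).fun_sub h3
  have key : ∀ t ∈ interior (Set.Icc (0:ℝ) 1), 0 ≤ deriv ψ t := by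
    intro t ht
    rw [interior_Icc] at ht
    rw [(hd t).deriv]
    have hthis := hsc (a + t • h) a
    have e1 : a + t • h - a = t • h := by abel
    rw [e1, norm_smul, real_inner_smul_right] at hthis
    have ht0 : 0 < t := ht.1
    simp only [Real.norm_eq_abs, abs_of_pos ht0] at hthis
    have hin : μ * t * ‖h‖ ^ 2 ≤ ⟪gradient f (a + t • h) - gradient f a, h⟫ := by
      nlinarith [hthis]
    rw [inner_sub_left] at hin
    linarith
  have hmono : MonotoneOn ψ (Set.Icc (0:ℝ) 1) := by
    apply monotoneOn_of_deriv_nonneg (convex_Icc 0 1)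
    · exact fun t _ => (hd t).differentiableAt.continuousAt.continuousWithinAt
    · intro t _
      exact ((hd t).differentiableAt).differentiableWithinAt
    · exact key
  have h01 := hmono (Set.mem_Icc.2 ⟨le_refl 0, zero_le_one⟩) (Set.mem_Icc.2 ⟨zero_le_one, le_refl 1⟩) zero_le_one
  simp only [hψ, zero_smul, add_zero, one_smul, zero_mul, zero_pow, mul_zero, sub_zero, one_mul, one_pow, mul_one] at h01
  have : a + h = b := by rw [hh]; abel
  rw [this] at h01
  linarith

lemma upper_bound_aux (f : E → ℝ) (hf : Differentiable ℝ f) (L : ℝ)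
    (hLip : ∀ x x' : E, ‖gradient f x - gradient f x'‖ ≤ L * ‖x - x'‖)
    (a b : E) : f b ≤ f a + ⟪gradient f a, b - a⟫ + L / 2 * ‖b - a‖ ^ 2 := by
  set h := b - a with hh
  set ψ : ℝ → ℝ := fun t => f (a + t • h) - t * ⟪gradient f a, h⟫ - L / 2 * t ^ 2 * ‖h‖ ^ 2 with hψ
  have hd : ∀ t : ℝ, HasDerivAt ψ
      (⟪gradient f (a + t • h), h⟫ - ⟪gradient f a, h⟫ - L * t * ‖h‖ ^ 2) t := by
    intro t
    have h1 := lineDeriv_aux f hf a h t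
    have h2 : HasDerivAt (fun t : ℝ => t * ⟪gradient f a, h⟫) ⟪gradient f a, h⟫ t := by
      simpa using (hasDerivAt_id t).mul_const ⟪gradient f a, h⟫
    have h3 : HasDerivAt (fun t : ℝ => L / 2 * t ^ 2 * ‖h‖ ^ 2) (L * t * ‖h‖ ^ 2) t := by
      have := quad_deriv_aux (L / 2) (‖h‖ ^ 2) t
      convert this using 1; ring
    simpa [hψ] using (h1.fun_sub h2).fun_sub h3
  have key : ∀ t ∈ interior (Set.Icc (0:ℝ) 1), deriv ψ t ≤ 0 := by
    intro t ht
    rw [interior_Icc] at ht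
    rw [(hd t).deriv]
    have hcs := real_inner_le_norm (gradient f (a + t • h) - gradient f a) h
    have hl := hLip (a + t • h) a
    have e1 : a + t • h - a = t • h := by abel
    rw [e1, norm_smul] at hl
    have ht0 : 0 < t := ht.1
    simp only [Real.norm_eq_abs, abs_of_pos ht0] at hl
    have hnn : ‖gradient f (a + t • h) - gradient f a‖ * ‖h‖ ≤ L * t * ‖h‖ ^ 2 := by
      nlinarith [norm_nonneg h, norm_nonneg (gradient f (a + t • h) - gradient f a)]
    rw [inner_sub_left] at hcs
    linarith
  have hmono : AntitoneOn ψ (Set.Icc (0:ℝ) 1) := by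
    apply antitoneOn_of_deriv_nonpos (convex_Icc 0 1)
    · exact fun t _ => (hd t).differentiableAt.continuousAt.continuousWithinAt
    · intro t _
      exact ((hd t).differentiableAt).differentiableWithinAt
    · exact key
  have h01 := hmono (Set.mem_Icc.2 ⟨le_refl 0, zero_le_one⟩) (Set.mem_Icc.2 ⟨zero_le_one, le_refl 1⟩) zero_le_one
  simp only [hψ, zero_smul, add_zero, one_smul, zero_mul, zero_pow, mul_zero, sub_zero, one_mul, one_pow, mul_one] at h01
  have : a + h = b := by rw [hh]; abel
  rw [this] at h01
  linarith

lemma cocoercive_aux (φ : E → ℝ) (Gr : E → E) (c : ℝ) (hc : 0 < c)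
    (low : ∀ a b : E, φ a + ⟪Gr a, b - a⟫ ≤ φ b)
    (up : ∀ a b : E, φ b ≤ φ a + ⟪Gr a, b - a⟫ + c / 2 * ‖b - a‖ ^ 2)
    (a b : E) : (1 / c) * ‖Gr a - Gr b‖ ^ 2 ≤ ⟪Gr a - Gr b, a - b⟫ := by
  have main : ∀ x y : E, φ x + ⟪Gr x, y - x⟫ + (1 / (2 * c)) * ‖Gr y - Gr x‖ ^ 2 ≤ φ y := by
    intro x y
    set w := Gr y - Gr x with hw
    set z := y - (1 / c) • w with hz
    have h1 := low x z
    have h2 := up y z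
    have e1 : z - y = -((1 / c) • w) := by rw [hz]; abel
    have e2 : z - x = (y - x) - (1 / c) • w := by rw [hz]; abel
    rw [e1] at h2
    rw [e2] at h1
    rw [inner_neg_right, real_inner_smul_right] at h2
    rw [inner_sub_right, real_inner_smul_right] at h1
    rw [norm_neg, norm_smul, Real.norm_eq_abs, abs_of_pos (by positivity : (0:ℝ) < 1/c)] at h2
    have hGyw : ⟪Gr y, w⟫ - ⟪Gr x, w⟫ = ‖w‖ ^ 2 := by
      rw [hw, ← inner_sub_left]; exact real_inner_self_eq_norm_sq w
    have hexp : (1/c * ‖w‖) ^ 2 = 1/c^2 * ‖w‖^2 := by rw [mul_pow]; ring_nf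
    rw [hexp] at h2
    have htrans := le_trans h1 h2
    have hc2 : c ≠ 0 := ne_of_gt hc
    have key2 : (1/c) * ⟪Gr y, w⟫ - (1/c) * ⟪Gr x, w⟫ = (1/c) * ‖w‖^2 := by
      linear_combination (1/c) * hGyw
    have f1 : c / 2 * (1 / c ^ 2 * ‖w‖ ^ 2) = 1/(2*c) * ‖w‖^2 := by
      field_simp
    have f2 : (1/c) * ‖w‖^2 = 1/(2*c) * ‖w‖^2 + 1/(2*c) * ‖w‖^2 := by
      field_simp; ring
    linarith
  have m1 := main a b
  have m2 := main b a
  have e3 : Gr a - Gr b = -(Gr b - Gr a) := by abel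
  have hn : ‖Gr a - Gr b‖ = ‖Gr b - Gr a‖ := by rw [e3, norm_neg]
  have e4 : ⟪Gr b, a - b⟫ = - ⟪Gr b, b - a⟫ := by rw [← inner_neg_right]; congr 1; abel
  rw [inner_sub_left, e4, hn]
  have e5 : ⟪Gr a, b - a⟫ = - ⟪Gr a, a - b⟫ := by rw [← inner_neg_right]; congr 1; abel
  rw [e5] at m1
  have f3 : (1 / (2*c)) * ‖Gr b - Gr a‖^2 + (1 / (2*c)) * ‖Gr b - Gr a‖^2 = (1/c) * ‖Gr b - Gr a‖^2 := by
    field_simp; ring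
  rw [hn, e4] at m2
  linarith [m1, m2, f3]

lemma key_aux (f : E → ℝ) (hf : Differentiable ℝ f) (μ L : ℝ) (hμ : 0 < μ) (hμL : μ ≤ L)
    (hsc : ∀ x x' : E, μ * ‖x - x'‖ ^ 2 ≤ ⟪gradient f x - gradient f x', x - x'⟫)
    (hLip : ∀ x x' : E, ‖gradient f x - gradient f x'‖ ≤ L * ‖x - x'‖)
    (a b : E) :
    ‖gradient f a - gradient f b‖ ^ 2 + μ * L * ‖a - b‖ ^ 2
      ≤ (μ + L) * ⟪gradient f a - gradient f b, a - b⟫ := by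
  rcases eq_or_lt_of_le hμL with heq | hlt
  · subst heq
    have h1 := hsc a b
    have h2 := hLip a b
    nlinarith [mul_self_le_mul_self (norm_nonneg (gradient f a - gradient f b)) h2,
      norm_nonneg (a - b), sq_nonneg ‖a - b‖]
  · set c := L - μ with hc
    have hc0 : 0 < c := by simp only [hc]; linarith
    set φ : E → ℝ := fun z => f z - μ / 2 * ‖z‖ ^ 2 with hφ
    set Gr : E → E := fun z => gradient f z - μ • z with hGr
    have normid : ∀ x y : E, ‖y - x‖ ^ 2 = ‖y‖ ^ 2 - ‖x‖ ^ 2 - 2 * ⟪x, y - x⟫ := by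
      intro x y
      have h1 : ‖y - x‖ ^ 2 = ‖y‖ ^ 2 - 2 * ⟪y, x⟫ + ‖x‖ ^ 2 := norm_sub_sq_real y x
      have h2 : ⟪x, y - x⟫ = ⟪x, y⟫ - ⟪x, x⟫ := inner_sub_right x y x
      have h3 : ⟪x, x⟫ = ‖x‖ ^ 2 := real_inner_self_eq_norm_sq x
      have h4 : ⟪y, x⟫ = ⟪x, y⟫ := real_inner_comm x y
      linarith
    have Grinner : ∀ x w : E, ⟪Gr x, w⟫ = ⟪gradient f x, w⟫ - μ * ⟪x, w⟫ := by
      intro x w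
      simp [hGr, inner_sub_left, real_inner_smul_left]
    have low : ∀ x y : E, φ x + ⟪Gr x, y - x⟫ ≤ φ y := by
      intro x y
      have := lower_bound_aux f hf μ hsc x y
      rw [normid x y] at this
      rw [Grinner]
      simp only [hφ]
      linarith
    have up : ∀ x y : E, φ y ≤ φ x + ⟪Gr x, y - x⟫ + c / 2 * ‖y - x‖ ^ 2 := by
      intro x y
      have := upper_bound_aux f hf L hLip x y
      have hnid := normid x y
      rw [Grinner]
      simp only [hφ, hc]
      nlinarith [this, hnid]
    have hco := cocoercive_aux φ Gr c hc0 low up a b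
    set d := gradient f a - gradient f b with hd
    set h := a - b with hh
    have eGr : Gr a - Gr b = d - μ • h := by
      simp only [hGr, hd, hh, smul_sub]
      abel
    rw [eGr] at hco
    have e1 : ⟪d - μ • h, h⟫ = ⟪d, h⟫ - μ * ⟪h, h⟫ := by
      rw [inner_sub_left, real_inner_smul_left]
    have e2 : ‖d - μ • h‖ ^ 2 = ‖d‖ ^ 2 - 2 * (μ * ⟪d, h⟫) + μ ^ 2 * ‖h‖ ^ 2 := by
      rw [norm_sub_sq_real, real_inner_smul_right, norm_smul, mul_pow]
      rw [Real.norm_eq_abs, abs_of_pos hμ]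
    have e3 : ⟪h, h⟫ = ‖h‖ ^ 2 := real_inner_self_eq_norm_sq h
    rw [e1, e2, e3] at hco
    rw [one_div, inv_mul_eq_div, div_le_iff₀ hc0] at hco
    simp only [hc] at hco
    nlinarith [hco]

lemma contraction_aux (μ L α' : ℝ) (hμ : 0 < μ) (hμL : μ ≤ L)
    (hα'0 : 0 ≤ α') (hα'2 : α' ≤ 2 / (μ + L)) (h G : E)
    (hkey : ‖G‖ ^ 2 + μ * L * ‖h‖ ^ 2 ≤ (μ + L) * ⟪G, h⟫)
    (hmono : μ * ‖h‖ ^ 2 ≤ ⟪G, h⟫) :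
    ‖h - α' • G‖ ≤ (1 - α' * μ) * ‖h‖ := by
  have hs : (0:ℝ) < μ + L := by linarith
  rw [le_div_iff₀ hs] at hα'2
  have h1μ : 0 ≤ 1 - α' * μ := by nlinarith
  have esq : ‖h - α' • G‖ ^ 2 = ‖h‖ ^ 2 - 2 * (α' * ⟪G, h⟫) + α' ^ 2 * ‖G‖ ^ 2 := by
    rw [norm_sub_sq_real, real_inner_smul_right, norm_smul, mul_pow]
    rw [Real.norm_eq_abs, sq_abs, real_inner_comm]
  have hsq : ‖h - α' • G‖ ^ 2 ≤ ((1 - α' * μ) * ‖h‖) ^ 2 := by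
    rw [esq]
    rcases le_total (‖G‖ ^ 2) (μ ^ 2 * ‖h‖ ^ 2) with hcase | hcase
    · nlinarith [mul_le_mul_of_nonneg_left hmono hα'0,
        mul_le_mul_of_nonneg_left hcase (sq_nonneg α')]
    · have cert : 0 ≤ α' * (2 - α' * (μ + L)) * (‖G‖ ^ 2 - μ ^ 2 * ‖h‖ ^ 2) :=
        mul_nonneg (mul_nonneg hα'0 (by linarith)) (by linarith)
      have hA := mul_le_mul_of_nonneg_left hkey hα'0
      have goal' : (μ + L) * (‖h‖ ^ 2 - 2 * (α' * ⟪G, h⟫) + α' ^ 2 * ‖G‖ ^ 2)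
          ≤ (μ + L) * (((1 - α' * μ) * ‖h‖) ^ 2) := by nlinarith [cert, hA]
      exact le_of_mul_le_mul_left goal' hs
  have := Real.sqrt_le_sqrt (le_of_lt (lt_of_le_of_lt hsq (lt_add_one _)))
  calc ‖h - α' • G‖ = Real.sqrt (‖h - α' • G‖ ^ 2) := by
        rw [Real.sqrt_sq (norm_nonneg _)]
    _ ≤ Real.sqrt (((1 - α' * μ) * ‖h‖) ^ 2) := Real.sqrt_le_sqrt hsq
    _ = (1 - α' * μ) * ‖h‖ := Real.sqrt_sq (by positivity)


set_option maxHeartbeats 1600000 in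
/-- The first inequality of the linear system: under strong convexity,
Lipschitz gradients, the gradient-tracking identity and the update
`x̄_{k+1} = x̄_k − (α/n)uᵀ𝐲_k`, one has
`‖x̄_{k+1} − x*‖₂ ≤ (1 − α'μ)‖x̄_k − x*‖₂ + (α'L/√n)‖𝐱_k − 1x̄_k‖_F
  + (α‖u−1‖₂/n)‖𝐲_k − vȳ_k‖_F`.
Rows of the `n×p` matrices are vectors in `ℝᵖ`. -/
theorem push_pull_stmt14 (n p : ℕ) (hn : 0 < n) (μ L : ℝ) (hμ : 0 < μ) (hμL : μ ≤ L)
    (f : Fin n → EuclideanSpace ℝ (Fin p) → ℝ)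
    (hdiff : ∀ i, Differentiable ℝ (f i))
    (hsc : ∀ i, ∀ x x' : EuclideanSpace ℝ (Fin p),
      μ * ‖x - x'‖ ^ 2 ≤ ⟪gradient (f i) x - gradient (f i) x', x - x'⟫)
    (hLip : ∀ i, ∀ x x' : EuclideanSpace ℝ (Fin p),
      ‖gradient (f i) x - gradient (f i) x'‖ ≤ L * ‖x - x'‖)
    (xstar : EuclideanSpace ℝ (Fin p))
    (hmin : ∀ z, ∑ i, f i xstar ≤ ∑ i, f i z)
    (u v : Fin n → ℝ) (hu_sum : ∑ i, u i = (n : ℝ)) (hv_sum : ∑ i, v i = (n : ℝ))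
    (α : ℝ) (hα : 0 < α)
    (α' : ℝ) (hα' : α' = (α / n) * ∑ i, u i * v i)
    (hα'0 : 0 ≤ α') (hα'2 : α' ≤ 2 / (μ + L))
    (x y : Fin n → EuclideanSpace ℝ (Fin p))
    (xbar ybar xbar' : EuclideanSpace ℝ (Fin p))
    (hxbar : xbar = ((n : ℝ)⁻¹) • ∑ i, u i • x i)
    (hybar : ybar = ((n : ℝ)⁻¹) • ∑ i, y i)
    (htrack : ybar = ((n : ℝ)⁻¹) • ∑ i, gradient (f i) (x i))
    (hupdate : xbar' = xbar - (α / n) • ∑ i, u i • y i) :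
    ‖xbar' - xstar‖ ≤ (1 - α' * μ) * ‖xbar - xstar‖
      + (α' * L / Real.sqrt n) * Real.sqrt (∑ i, ‖x i - xbar‖ ^ 2)
      + (α * Real.sqrt (∑ i, (u i - 1) ^ 2) / n) * Real.sqrt (∑ i, ‖y i - v i • ybar‖ ^ 2) := by
  have hn' : (0:ℝ) < n := by exact_mod_cast hn
  have hnne : (n:ℝ) ≠ 0 := ne_of_gt hn'
  have hL : (0:ℝ) < L := lt_of_lt_of_le hμ hμL
  -- gradient sum is zero at the minimizer
  have hzero : ∑ i, gradient (f i) xstar = 0 := by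
    have hloc : IsLocalMin (fun z => ∑ i, f i z) xstar := Filter.Eventually.of_forall hmin
    have hfd := hloc.fderiv_eq_zero
    have hsum : fderiv ℝ (fun z => ∑ i, f i z) xstar = ∑ i, fderiv ℝ (f i) xstar :=
      fderiv_fun_sum (fun i _ => (hdiff i).differentiableAt)
    have hgrad : ∀ i, fderiv ℝ (f i) xstar
        = InnerProductSpace.toDual ℝ _ (gradient (f i) xstar) := fun i =>
      (hasGradientAt_iff_hasFDerivAt.1 ((hdiff i) xstar).hasGradientAt).fderiv
    have htd : (InnerProductSpace.toDual ℝ (EuclideanSpace ℝ (Fin p)))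
        (∑ i, gradient (f i) xstar) = 0 := by
      rw [map_sum]; simp_rw [← hgrad]; rw [← hsum, hfd]
    simpa only [LinearIsometryEquiv.symm_apply_apply, map_zero] using congrArg (InnerProductSpace.toDual ℝ (EuclideanSpace ℝ (Fin p))).symm htd
  set G : EuclideanSpace ℝ (Fin p) := ((n:ℝ)⁻¹) • ∑ i, gradient (f i) xbar with hG
  set h : EuclideanSpace ℝ (Fin p) := xbar - xstar with hh
  set d : Fin n → EuclideanSpace ℝ (Fin p) :=
    fun i => gradient (f i) xbar - gradient (f i) xstar with hd
  have hsumd : ∑ i, d i = (n:ℝ) • G := by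
    rw [hG, smul_smul, mul_inv_cancel₀ hnne, one_smul]
    simp [hd, Finset.sum_sub_distrib, hzero]
  have hinner_sum : ⟪∑ i, d i, h⟫ = (n:ℝ) * ⟪G, h⟫ := by
    rw [hsumd, real_inner_smul_left]
  -- sum the key inequality
  have keysum : ∑ i, ‖d i‖^2 + (n:ℝ) * (μ*L*‖h‖^2) ≤ (μ+L) * ((n:ℝ) * ⟪G, h⟫) := by
    have hterm : ∀ i : Fin n, ‖d i‖^2 + μ*L*‖h‖^2 ≤ (μ+L) * ⟪d i, h⟫ := fun i =>
      key_aux (f i) (hdiff i) μ L hμ hμL (hsc i) (hLip i) xbar xstar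
    have hsum2 := Finset.sum_le_sum (fun i (_ : i ∈ Finset.univ) => hterm i)
    rw [Finset.sum_add_distrib, ← Finset.mul_sum] at hsum2
    have e1 : ∑ i : Fin n, (μ+L) * ⟪d i, h⟫ = (μ+L) * ((n:ℝ) * ⟪G,h⟫) := by
      rw [← Finset.mul_sum, ← sum_inner, hinner_sum]
    have e2 : ∑ _i : Fin n, ‖h‖^2 = (n:ℝ) * ‖h‖^2 := by
      rw [Finset.sum_const, Finset.card_univ, Fintype.card_fin, nsmul_eq_mul]
    rw [e1, e2] at hsum2
    linarith
  have hCS : (n:ℝ)^2 * ‖G‖^2 ≤ (n:ℝ) * ∑ i, ‖d i‖^2 := by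
    have h1 : ‖∑ i, d i‖ ≤ ∑ i, ‖d i‖ := norm_sum_le _ _
    have h2 : (∑ i, ‖d i‖)^2 ≤ (n:ℝ) * ∑ i, ‖d i‖^2 := by
      have := Finset.sum_mul_sq_le_sq_mul_sq Finset.univ (fun _ => (1:ℝ)) (fun i => ‖d i‖)
      simpa using this
    have h4 : ‖∑ i, d i‖ = (n:ℝ) * ‖G‖ := by
      rw [hsumd, norm_smul, Real.norm_eq_abs, abs_of_pos hn']
    have h5 : ((n:ℝ) * ‖G‖)^2 ≤ (∑ i, ‖d i‖)^2 := by
      rw [← h4]; exact pow_le_pow_left₀ (norm_nonneg _) h1 2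
    calc (n:ℝ)^2 * ‖G‖^2 = ((n:ℝ) * ‖G‖)^2 := by ring
      _ ≤ (∑ i, ‖d i‖)^2 := h5
      _ ≤ (n:ℝ) * ∑ i, ‖d i‖^2 := h2
  have hkeyG : ‖G‖^2 + μ*L*‖h‖^2 ≤ (μ+L) * ⟪G,h⟫ := by
    have hstep : (n:ℝ)^2 * (‖G‖^2 + μ*L*‖h‖^2) ≤ (n:ℝ)^2 * ((μ+L) * ⟪G,h⟫) := by
      nlinarith [keysum, hCS, hn']
    exact le_of_mul_le_mul_left hstep (by positivity)
  have hmonoG : μ * ‖h‖^2 ≤ ⟪G,h⟫ := by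
    have hterm : ∀ i : Fin n, μ * ‖h‖^2 ≤ ⟪d i, h⟫ := fun i => hsc i xbar xstar
    have hsum2 := Finset.sum_le_sum (fun i (_ : i ∈ Finset.univ) => hterm i)
    rw [← sum_inner, hinner_sum] at hsum2
    simp only [Finset.sum_const, Finset.card_univ, Fintype.card_fin, nsmul_eq_mul] at hsum2
    have : (n:ℝ) * (μ * ‖h‖^2) ≤ (n:ℝ) * ⟪G,h⟫ := by linarith
    exact le_of_mul_le_mul_left this hn'
  have hcontr := contraction_aux μ L α' hμ hμL hα'0 hα'2 h G hkeyG hmonoG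
  -- tracking error bound
  set Sx := Real.sqrt (∑ i, ‖x i - xbar‖ ^ 2) with hSx
  have hsqn : Real.sqrt n * Real.sqrt n = (n:ℝ) := Real.mul_self_sqrt (le_of_lt hn')
  have hsqnpos : (0:ℝ) < Real.sqrt n := Real.sqrt_pos.2 hn'
  have htrb : ‖ybar - G‖ ≤ L / Real.sqrt n * Sx := by
    have htr : ybar - G = ((n:ℝ)⁻¹) • ∑ i, (gradient (f i) (x i) - gradient (f i) xbar) := by
      rw [htrack, hG, ← smul_sub, ← Finset.sum_sub_distrib]
    have h1 : ‖∑ i, (gradient (f i) (x i) - gradient (f i) xbar)‖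
        ≤ ∑ i, L * ‖x i - xbar‖ :=
      le_trans (norm_sum_le _ _) (Finset.sum_le_sum (fun i _ => hLip i (x i) xbar))
    have h3 : ∑ i, ‖x i - xbar‖ ≤ Real.sqrt n * Sx := by
      have := Real.sum_mul_le_sqrt_mul_sqrt Finset.univ (fun _ => (1:ℝ)) (fun i => ‖x i - xbar‖)
      simpa [hSx] using this
    rw [htr, norm_smul, Real.norm_eq_abs, abs_of_pos (by positivity : (0:ℝ) < (n:ℝ)⁻¹)]
    have hkey5 : (n:ℝ)⁻¹ * Real.sqrt n = (Real.sqrt n)⁻¹ := by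
      have h6 : Real.sqrt n * ((n:ℝ)⁻¹ * Real.sqrt n) = Real.sqrt n * (Real.sqrt n)⁻¹ := by
        rw [mul_inv_cancel₀ (ne_of_gt hsqnpos)]
        calc Real.sqrt n * ((n:ℝ)⁻¹ * Real.sqrt n)
            = (Real.sqrt n * Real.sqrt n) * (n:ℝ)⁻¹ := by ring
          _ = (n:ℝ) * (n:ℝ)⁻¹ := by rw [hsqn]
          _ = 1 := mul_inv_cancel₀ hnne
      exact mul_left_cancel₀ (ne_of_gt hsqnpos) h6
    have h5 : (n:ℝ)⁻¹ * (L * (Real.sqrt n * Sx)) = L / Real.sqrt n * Sx := by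
      rw [div_eq_mul_inv, ← hkey5]; ring
    rw [← Finset.mul_sum] at h1
    calc ((n:ℝ))⁻¹ * ‖∑ i, (gradient (f i) (x i) - gradient (f i) xbar)‖
        ≤ (n:ℝ)⁻¹ * (L * ∑ i, ‖x i - xbar‖) := by
          apply mul_le_mul_of_nonneg_left h1 (by positivity)
      _ ≤ (n:ℝ)⁻¹ * (L * (Real.sqrt n * Sx)) := by
          apply mul_le_mul_of_nonneg_left (mul_le_mul_of_nonneg_left h3 (le_of_lt hL)) (by positivity)
      _ = L / Real.sqrt n * Sx := h5
  -- third term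
  set w : Fin n → EuclideanSpace ℝ (Fin p) := fun i => y i - v i • ybar with hw
  set Sy := Real.sqrt (∑ i, ‖y i - v i • ybar‖ ^ 2) with hSy
  have hWb : ‖∑ i, (u i - 1) • w i‖ ≤ Real.sqrt (∑ i, (u i - 1)^2) * Sy := by
    calc ‖∑ i, (u i - 1) • w i‖ ≤ ∑ i, ‖(u i - 1) • w i‖ := norm_sum_le _ _
      _ = ∑ i, |u i - 1| * ‖w i‖ := by
          refine Finset.sum_congr rfl (fun i _ => ?_)
          rw [norm_smul, Real.norm_eq_abs]
      _ ≤ Real.sqrt (∑ i, |u i - 1|^2) * Real.sqrt (∑ i, ‖w i‖^2) :=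
          Real.sum_mul_le_sqrt_mul_sqrt _ _ _
      _ = Real.sqrt (∑ i, (u i - 1)^2) * Sy := by
          simp_rw [sq_abs]; rfl
  -- decomposition
  have hS1 : ∑ i, y i = (n:ℝ) • ybar := by
    rw [hybar, smul_smul, mul_inv_cancel₀ hnne, one_smul]
  have hexp : ∑ i, (u i - 1) • w i = ∑ i, u i • y i - (∑ i, u i * v i) • ybar := by
    have hterm : ∀ i : Fin n, (u i - 1) • w i
        = u i • y i - (u i * v i) • ybar - y i + v i • ybar := by
      intro i
      simp only [hw]
      rw [smul_sub, sub_smul, sub_smul, one_smul, one_smul, smul_smul]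
      abel
    rw [Finset.sum_congr rfl (fun i _ => hterm i)]
    rw [Finset.sum_add_distrib, Finset.sum_sub_distrib, Finset.sum_sub_distrib,
      ← Finset.sum_smul, ← Finset.sum_smul, hS1, hv_sum]
    abel
  have hdecomp : xbar' - xstar
      = (h - α' • G) - α' • (ybar - G) - (α/n) • ∑ i, (u i - 1) • w i := by
    rw [hupdate, hexp, hh, hα']
    module
  rw [hdecomp]
  have htri : ‖(h - α' • G) - α' • (ybar - G) - (α/n) • ∑ i, (u i - 1) • w i‖
      ≤ ‖h - α' • G‖ + ‖α' • (ybar - G)‖ + ‖(α/n) • ∑ i, (u i - 1) • w i‖ := by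
    have t1 := norm_sub_le ((h - α' • G) - α' • (ybar - G)) ((α/n) • ∑ i, (u i - 1) • w i)
    have t2 := norm_sub_le (h - α' • G) (α' • (ybar - G))
    linarith
  have hT2 : ‖α' • (ybar - G)‖ ≤ (α' * L / Real.sqrt n) * Sx := by
    rw [norm_smul, Real.norm_eq_abs, abs_of_nonneg hα'0]
    calc α' * ‖ybar - G‖ ≤ α' * (L / Real.sqrt n * Sx) :=
          mul_le_mul_of_nonneg_left htrb hα'0
      _ = (α' * L / Real.sqrt n) * Sx := by ring
  have hT3 : ‖(α/n) • ∑ i, (u i - 1) • w i‖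
      ≤ (α * Real.sqrt (∑ i, (u i - 1)^2) / n) * Sy := by
    rw [norm_smul, Real.norm_eq_abs, abs_of_pos (by positivity : (0:ℝ) < α/n)]
    calc (α/n) * ‖∑ i, (u i - 1) • w i‖
        ≤ (α/n) * (Real.sqrt (∑ i, (u i - 1)^2) * Sy) :=
          mul_le_mul_of_nonneg_left hWb (by positivity)
      _ = (α * Real.sqrt (∑ i, (u i - 1)^2) / n) * Sy := by ring
  calc ‖(h - α' • G) - α' • (ybar - G) - (α/n) • ∑ i, (u i - 1) • w i‖
      ≤ ‖h - α' • G‖ + ‖α' • (ybar - G)‖ + ‖(α/n) • ∑ i, (u i - 1) • w i‖ := htri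
    _ ≤ (1 - α' * μ) * ‖h‖ + (α' * L / Real.sqrt n) * Sx
        + (α * Real.sqrt (∑ i, (u i - 1)^2) / n) * Sy :=
        add_le_add (add_le_add hcontr hT2) hT3
    _ = (1 - α' * μ) * ‖xbar - xstar‖ + (α' * L / Real.sqrt n) * Sx
        + (α * Real.sqrt (∑ i, (u i - 1)^2) / n) * Sy := by rw [hh]
end

section
/- Let f₁,…,f_n : ℝᵖ → ℝ be differentiable with L-Lipschitz continuous gradients and let x* ∈ ℝ^{1×p} satisfy Σ_{i=1}^n ∇f_i(x*) = 0. Let R ∈ ℝ^{n×n} with R·1 = 1, u ∈ ℝⁿ with uᵀR = uᵀ and uᵀ1 = n, v ∈ ℝⁿ with 1ᵀv = n, and α > 0. Let ‖·‖_R and ‖·‖_C be norms on ℝⁿ, extended to ℝ^{n×p} column-wise via the mixed-norm construction, and assume: (i) ‖(R − (1/n)1uᵀ)𝐳‖_R ≤ σ_R‖𝐳‖_R for all 𝐳 ∈ ℝ^{n×p}; (ii) ‖𝐳‖₂ ≤ ‖𝐳‖_R for all 𝐳 (‖·‖₂ the Frobenius norm); (iii) ‖𝐳‖_R ≤ δ_{R,C}‖𝐳‖_C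 for all 𝐳. Let 𝐱_k, 𝐲_k ∈ ℝ^{n×p}, set 𝐱_{k+1} := R(𝐱_k − α𝐲_k), define x̄_k := (1/n)uᵀ𝐱_k, x̄_{k+1} := (1/n)uᵀ𝐱_{k+1}, ȳ_k := (1/n)1ᵀ𝐲_k, and assume the gradient-tracking identity ȳ_k = (1/n)·Σ_{i=1}^n ∇f_i(x_{i,k})ᵀ. Then ‖𝐱_{k+1} − 1x̄_{k+1}‖_R ≤ σ_R(1 + α‖v − 1‖_R·L/√n)·‖𝐱_k − 1x̄_k‖_R + ασ_R δ_{R,C}·‖𝐲_k − vȳ_k‖_C + ασ_R‖v − 1‖_R·L·‖x̄_k − x*‖₂. -/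
/-- The mixed norm on `ℝ^{n×p}` (rows in `ℝᵖ`) built from a vector norm `N` on `ℝⁿ`:
the Euclidean norm of the vector of `N`-norms of the columns. -/
noncomputable def mixedNormFam {n p : ℕ} (N : (Fin n → ℝ) → ℝ)
    (x : Fin n → EuclideanSpace ℝ (Fin p)) : ℝ :=
  Real.sqrt (∑ j : Fin p, (N (fun i => x i j)) ^ 2)

section Aux
variable {n p : ℕ} {N : (Fin n → ℝ) → ℝ}

lemma seminorm_zero (hsmul : ∀ (c : ℝ) a, N (c • a) = |c| * N a) : N 0 = 0 := by
  have := hsmul 0 0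
  simpa using this

lemma seminorm_nonneg (htri : ∀ a b, N (a + b) ≤ N a + N b)
    (hsmul : ∀ (c : ℝ) a, N (c • a) = |c| * N a) (a : Fin n → ℝ) : 0 ≤ N a := by
  have hneg : N (-a) = N a := by
    have := hsmul (-1) a; simpa using this
  have h0 : N 0 = 0 := seminorm_zero hsmul
  have := htri a (-a)
  simp [h0, hneg] at this
  linarith

lemma mixedNormFam_nonneg (x : Fin n → EuclideanSpace ℝ (Fin p)) :
    0 ≤ mixedNormFam N x := Real.sqrt_nonneg _

/-- Minkowski for sqrt of sum of squares. -/
lemma sqrt_sum_sq_add_le (A B : Fin p → ℝ) :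
    Real.sqrt (∑ j, (A j + B j) ^ 2) ≤
      Real.sqrt (∑ j, A j ^ 2) + Real.sqrt (∑ j, B j ^ 2) := by
  have h := norm_add_le ((WithLp.equiv 2 (Fin p → ℝ)).symm A)
    ((WithLp.equiv 2 (Fin p → ℝ)).symm B)
  simpa [EuclideanSpace.norm_eq, Real.norm_eq_abs, sq_abs] using h

lemma mixed_triangle (htri : ∀ a b, N (a + b) ≤ N a + N b)
    (hsmul : ∀ (c : ℝ) a, N (c • a) = |c| * N a)
    (a b : Fin n → EuclideanSpace ℝ (Fin p)) :
    mixedNormFam N (fun i => a i + b i) ≤ mixedNormFam N a + mixedNormFam N b := by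
  have step1 : Real.sqrt (∑ j : Fin p, (N (fun i => (a i + b i) j)) ^ 2) ≤
      Real.sqrt (∑ j : Fin p, (N (fun i => a i j) + N (fun i => b i j)) ^ 2) := by
    apply Real.sqrt_le_sqrt
    apply Finset.sum_le_sum
    intro j _
    have h1 : (fun i => (a i + b i) j) = (fun i => a i j) + (fun i => b i j) := by
      funext i; simp
    rw [h1]
    have hn1 := seminorm_nonneg htri hsmul ((fun i => a i j) + (fun i => b i j))
    exact pow_le_pow_left₀ hn1 (htri _ _) 2
  exact step1.trans (sqrt_sum_sq_add_le _ _)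

lemma mixed_smul (hsmul : ∀ (c : ℝ) a, N (c • a) = |c| * N a)
    (c : ℝ) (a : Fin n → EuclideanSpace ℝ (Fin p)) :
    mixedNormFam N (fun i => c • a i) = |c| * mixedNormFam N a := by
  unfold mixedNormFam
  have : ∀ j : Fin p, (N fun i => (c • a i) j) ^ 2 = c ^ 2 * (N fun i => a i j) ^ 2 := by
    intro j
    have h1 : (fun i => (c • a i) j) = c • (fun i => a i j) := by
      funext i; simp
    rw [h1, hsmul, mul_pow, sq_abs]
  simp_rw [this]
  rw [← Finset.mul_sum, Real.sqrt_mul (sq_nonneg c), Real.sqrt_sq_eq_abs]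

lemma mixed_rank_one (htri : ∀ a b, N (a + b) ≤ N a + N b)
    (hsmul : ∀ (c : ℝ) a, N (c • a) = |c| * N a)
    (w : Fin n → ℝ) (b : EuclideanSpace ℝ (Fin p)) :
    mixedNormFam N (fun i => w i • b) = N w * ‖b‖ := by
  unfold mixedNormFam
  have : ∀ j : Fin p, (N fun i => (w i • b) j) ^ 2 = (b j) ^ 2 * N w ^ 2 := by
    intro j
    have h1 : (fun i => (w i • b) j) = (b j) • w := by
      funext i; simp [mul_comm]
    rw [h1, hsmul, mul_pow, sq_abs]
  simp_rw [this]
  rw [← Finset.sum_mul, Real.sqrt_mul (by positivity), Real.sqrt_sq_eq_abs,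
    abs_of_nonneg (seminorm_nonneg htri hsmul w), EuclideanSpace.norm_eq]
  simp [Real.norm_eq_abs, sq_abs, mul_comm]

end Aux
set_option maxHeartbeats 1000000 in
/-- The second inequality of the linear system: the consensus error of the
`x`-update of Push-Pull satisfies
`‖𝐱_{k+1} − 1x̄_{k+1}‖_R ≤ σ_R(1 + α‖v−1‖_R L/√n)‖𝐱_k − 1x̄_k‖_R
  + ασ_Rδ_{R,C}‖𝐲_k − vȳ_k‖_C + ασ_R‖v−1‖_R L‖x̄_k − x*‖₂`. -/
theorem push_pull_stmt15 (n p : ℕ) (hn : 0 < n) (L : ℝ) (hL : 0 ≤ L)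
    (f : Fin n → EuclideanSpace ℝ (Fin p) → ℝ)
    (hdiff : ∀ i, Differentiable ℝ (f i))
    (hLip : ∀ i, ∀ z z' : EuclideanSpace ℝ (Fin p),
      ‖gradient (f i) z - gradient (f i) z'‖ ≤ L * ‖z - z'‖)
    (xstar : EuclideanSpace ℝ (Fin p))
    (hopt : ∑ i, gradient (f i) xstar = 0)
    (R : Matrix (Fin n) (Fin n) ℝ)
    (hRrow : R.mulVec (fun _ => (1 : ℝ)) = fun _ => (1 : ℝ))
    (u : Fin n → ℝ) (hu_eig : Matrix.vecMul u R = u) (hu_sum : ∑ i, u i = (n : ℝ))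
    (v : Fin n → ℝ) (hv_sum : ∑ i, v i = (n : ℝ))
    (α : ℝ) (hα : 0 < α)
    (NR NC : (Fin n → ℝ) → ℝ)
    (hNR_triangle : ∀ a b, NR (a + b) ≤ NR a + NR b)
    (hNR_smul : ∀ (c : ℝ) a, NR (c • a) = |c| * NR a)
    (hNR_def : ∀ a, NR a = 0 → a = 0)
    (hNC_triangle : ∀ a b, NC (a + b) ≤ NC a + NC b)
    (hNC_smul : ∀ (c : ℝ) a, NC (c • a) = |c| * NC a)
    (hNC_def : ∀ a, NC a = 0 → a = 0)
    (σR δRC : ℝ)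
    (hσR : ∀ z : Fin n → EuclideanSpace ℝ (Fin p),
      mixedNormFam NR (fun i => ∑ j, (R i j - u j / n) • z j) ≤ σR * mixedNormFam NR z)
    (hfrobR : ∀ z : Fin n → EuclideanSpace ℝ (Fin p),
      Real.sqrt (∑ i, ‖z i‖ ^ 2) ≤ mixedNormFam NR z)
    (hRC : ∀ z : Fin n → EuclideanSpace ℝ (Fin p),
      mixedNormFam NR z ≤ δRC * mixedNormFam NC z)
    (x y x' : Fin n → EuclideanSpace ℝ (Fin p))
    (hupdate : ∀ i, x' i = ∑ j, R i j • (x j - α • y j))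
    (xbar xbar' ybar : EuclideanSpace ℝ (Fin p))
    (hxbar : xbar = ((n : ℝ)⁻¹) • ∑ i, u i • x i)
    (hxbar' : xbar' = ((n : ℝ)⁻¹) • ∑ i, u i • x' i)
    (hybar : ybar = ((n : ℝ)⁻¹) • ∑ i, y i)
    (htrack : ybar = ((n : ℝ)⁻¹) • ∑ i, gradient (f i) (x i)) :
    mixedNormFam NR (fun i => x' i - xbar') ≤
      σR * (1 + α * NR (fun i => v i - 1) * L / Real.sqrt n) *
        mixedNormFam NR (fun i => x i - xbar)
      + α * σR * δRC * mixedNormFam NC (fun i => y i - v i • ybar)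
      + α * σR * NR (fun i => v i - 1) * L * ‖xbar - xstar‖ := by
  have hn0 : (n : ℝ) ≠ 0 := Nat.cast_ne_zero.mpr hn.ne'
  have hnpos : (0 : ℝ) < n := Nat.cast_pos.mpr hn
  have hsqn : (0 : ℝ) < Real.sqrt n := Real.sqrt_pos.mpr hnpos
  -- trivial case p = 0
  rcases Nat.eq_zero_or_pos p with hp | hp
  · subst hp
    have hxx : xbar - xstar = (0 : EuclideanSpace ℝ (Fin 0)) := Subsingleton.elim _ _
    simp [mixedNormFam, hxx]
  -- row sums of R
  have hrow : ∀ i, ∑ j, R i j = (1 : ℝ) := by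
    intro i
    have := congrFun hRrow i
    simpa [Matrix.mulVec, dotProduct] using this
  have hcol : ∀ j, ∑ i, u i * R i j = u j := by
    intro j
    have := congrFun hu_eig j
    simpa [Matrix.vecMul, dotProduct] using this
  -- σR is nonneg
  have hσR0 : 0 ≤ σR := by
    set b : EuclideanSpace ℝ (Fin p) := (WithLp.equiv 2 _).symm (fun _ => (1:ℝ)) with hb
    set z0 : Fin n → EuclideanSpace ℝ (Fin p) := fun _ => b with hz0
    have hcolz : ∀ j : Fin p, (fun i : Fin n => z0 i j) = fun _ => (1:ℝ) := by
      intro j; funext i; simp [hz0, hb]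
    have hNc : 0 < NR (fun _ : Fin n => (1:ℝ)) := by
      rcases lt_or_eq_of_le (seminorm_nonneg hNR_triangle hNR_smul (fun _ : Fin n => (1:ℝ))) with h | h
      · exact h
      · exfalso
        have := hNR_def _ h.symm
        have := congrFun this ⟨0, hn⟩
        simpa using this
    have hpos : 0 < mixedNormFam NR z0 := by
      unfold mixedNormFam
      apply Real.sqrt_pos.mpr
      apply Finset.sum_pos
      · intro j _
        rw [hcolz j]; positivity
      · exact Finset.univ_nonempty_iff.mpr ⟨⟨0, hp⟩⟩
    have h1 := hσR z0
    have h2 : (0:ℝ) ≤ mixedNormFam NR (fun i => ∑ j, (R i j - u j / n) • z0 j) :=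
      mixedNormFam_nonneg _
    nlinarith
  -- key algebraic identity
  set w : Fin n → EuclideanSpace ℝ (Fin p) := fun j => x j - α • y j with hw
  set z : Fin n → EuclideanSpace ℝ (Fin p) :=
    fun j => (x j - xbar) - α • (y j - ybar) with hz
  have hxb' : xbar' = ∑ j, (((n:ℝ))⁻¹ * u j) • w j := by
    have h1 : ∑ i, u i • x' i = ∑ j, u j • w j := by
      simp_rw [hupdate]
      simp_rw [Finset.smul_sum]
      rw [Finset.sum_comm]
      refine Finset.sum_congr rfl fun j _ => ?_
      rw [← hcol j, Finset.sum_smul]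
      exact Finset.sum_congr rfl fun i _ => by rw [mul_smul]
    rw [hxbar', h1, Finset.smul_sum]
    exact Finset.sum_congr rfl fun j _ => by rw [smul_smul]
  have hkey : ∀ i, x' i - xbar' = ∑ j, (R i j - u j / n) • z j := by
    intro i
    have hcoef : ∑ j, (R i j - u j / (n:ℝ)) = 0 := by
      rw [Finset.sum_sub_distrib, hrow, ← Finset.sum_div, hu_sum]
      field_simp
      simp
    have hzw : ∀ j, z j = w j - (xbar - α • ybar) := by
      intro j
      simp only [hz, hw, smul_sub]
      abel
    calc x' i - xbar'
        = ∑ j, R i j • w j - ∑ j, (((n:ℝ))⁻¹ * u j) • w j := by rw [hupdate, hxb']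
      _ = ∑ j, (R i j - u j / n) • w j := by
          rw [← Finset.sum_sub_distrib]
          refine Finset.sum_congr rfl fun j _ => ?_
          rw [← sub_smul]
          congr 1
          field_simp
      _ = ∑ j, (R i j - u j / n) • z j := by
          simp_rw [hzw, smul_sub, Finset.sum_sub_distrib, ← Finset.sum_smul, hcoef,
            zero_smul, sub_zero]
  -- abbreviations
  set NRv : ℝ := NR (fun i => v i - 1) with hNRv
  set A : ℝ := mixedNormFam NR (fun i => x i - xbar) with hA
  set MC : ℝ := mixedNormFam NC (fun i => y i - v i • ybar) with hMC
  set D : ℝ := ‖xbar - xstar‖ with hD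
  set W : ℝ := mixedNormFam NR (fun i => y i - ybar) with hW
  have hNRv0 : 0 ≤ NRv := seminorm_nonneg hNR_triangle hNR_smul _
  have hA0 : 0 ≤ A := mixedNormFam_nonneg _
  have hMC0 : 0 ≤ MC := mixedNormFam_nonneg _
  have hD0 : 0 ≤ D := norm_nonneg _
  -- step 1 : contraction
  have step1 : mixedNormFam NR (fun i => x' i - xbar') ≤ σR * mixedNormFam NR z := by
    have he : (fun i => x' i - xbar') = fun i => ∑ j, (R i j - u j / n) • z j :=
      funext hkey
    rw [he]
    exact hσR z
  -- step 2 : triangle on z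
  have step2 : mixedNormFam NR z ≤ A + α * W := by
    have he : ∀ i, z i = (x i - xbar) + (-α) • (y i - ybar) := by
      intro i; simp only [hz]; module
    have h1 := mixed_triangle hNR_triangle hNR_smul
      (fun i => x i - xbar) (fun i => (-α) • (y i - ybar))
    have h2 := mixed_smul hNR_smul (-α) (fun i => y i - ybar)
    have he2 : z = fun i => (x i - xbar) + (-α) • (y i - ybar) := funext he
    rw [he2]
    rw [h2, abs_neg, abs_of_pos hα] at h1
    exact h1
  -- step 3 : split y - ybar
  have step3 : W ≤ δRC * MC + NRv * ‖ybar‖ := by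
    have he : (fun i => y i - ybar) =
        fun i => (y i - v i • ybar) + ((v i - 1) • ybar) := by
      funext i
      rw [sub_smul, one_smul]
      abel
    have h1 := mixed_triangle hNR_triangle hNR_smul
      (fun i => y i - v i • ybar) (fun i => (v i - 1) • ybar)
    have h2 := hRC (fun i => y i - v i • ybar)
    have h3 := mixed_rank_one hNR_triangle hNR_smul (fun i => v i - 1) ybar
    rw [hW, he]
    calc mixedNormFam NR (fun i => (y i - v i • ybar) + (v i - 1) • ybar)
        ≤ mixedNormFam NR (fun i => y i - v i • ybar)
          + mixedNormFam NR (fun i => (v i - 1) • ybar) := h1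
      _ ≤ δRC * MC + NRv * ‖ybar‖ := by rw [h3]; exact add_le_add h2 le_rfl
  -- step 4 : bound ‖ybar‖
  have step4 : ‖ybar‖ ≤ L / Real.sqrt n * A + L * D := by
    have hgrad : ∑ i, gradient (f i) (x i)
        = ∑ i, (gradient (f i) (x i) - gradient (f i) xstar) := by
      rw [Finset.sum_sub_distrib, hopt, sub_zero]
    have h1 : ‖∑ i, gradient (f i) (x i)‖ ≤ ∑ i, L * ‖x i - xstar‖ := by
      rw [hgrad]
      exact (norm_sum_le _ _).trans (Finset.sum_le_sum fun i _ => hLip i _ _)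
    have h2 : ∀ i, ‖x i - xstar‖ ≤ ‖x i - xbar‖ + D := by
      intro i
      have : x i - xstar = (x i - xbar) + (xbar - xstar) := by abel
      rw [this, hD]
      exact norm_add_le _ _
    have h3 : ∑ i, ‖x i - xbar‖ ≤ Real.sqrt n * A := by
      have hcs : (∑ i, ‖x i - xbar‖) ^ 2 ≤ (n : ℝ) * ∑ i, ‖x i - xbar‖ ^ 2 := by
        have := sq_sum_le_card_mul_sum_sq (s := Finset.univ)
          (f := fun i : Fin n => ‖x i - xbar‖)
        simpa using this
      have hfr := hfrobR (fun i => x i - xbar)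
      have hsum0 : (0:ℝ) ≤ ∑ i, ‖x i - xbar‖ :=
        Finset.sum_nonneg fun i _ => norm_nonneg _
      have h4 : ∑ i, ‖x i - xbar‖ ≤ Real.sqrt ((n : ℝ) * ∑ i, ‖x i - xbar‖ ^ 2) := by
        rw [← Real.sqrt_sq hsum0]
        exact Real.sqrt_le_sqrt hcs
      rw [Real.sqrt_mul hnpos.le] at h4
      calc ∑ i, ‖x i - xbar‖
          ≤ Real.sqrt n * Real.sqrt (∑ i, ‖x i - xbar‖ ^ 2) := h4
        _ ≤ Real.sqrt n * A := by
            exact mul_le_mul_of_nonneg_left hfr hsqn.le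
    have hybar_eq : ‖ybar‖ = (n:ℝ)⁻¹ * ‖∑ i, gradient (f i) (x i)‖ := by
      rw [htrack, norm_smul]
      simp [abs_of_pos (inv_pos.mpr hnpos)]
    rw [hybar_eq]
    have h5 : ‖∑ i, gradient (f i) (x i)‖ ≤ L * (Real.sqrt n * A) + (n:ℝ) * (L * D) := by
      calc ‖∑ i, gradient (f i) (x i)‖
          ≤ ∑ i, L * ‖x i - xstar‖ := h1
        _ ≤ ∑ i, (L * ‖x i - xbar‖ + L * D) := by
            refine Finset.sum_le_sum fun i _ => ?_
            have := h2 i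
            nlinarith [norm_nonneg (x i - xbar)]
        _ = L * (∑ i, ‖x i - xbar‖) + (n:ℝ) * (L * D) := by
            rw [Finset.sum_add_distrib, ← Finset.mul_sum]
            simp [Finset.sum_const, mul_comm]
        _ ≤ L * (Real.sqrt n * A) + (n:ℝ) * (L * D) := by
            have := mul_le_mul_of_nonneg_left h3 hL
            linarith
    have hinv : (0:ℝ) ≤ (n:ℝ)⁻¹ := by positivity
    calc (n:ℝ)⁻¹ * ‖∑ i, gradient (f i) (x i)‖
        ≤ (n:ℝ)⁻¹ * (L * (Real.sqrt n * A) + (n:ℝ) * (L * D)) :=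
          mul_le_mul_of_nonneg_left h5 hinv
      _ = L / Real.sqrt n * A + L * D := by
          have key : Real.sqrt n * Real.sqrt n = (n:ℝ) := Real.mul_self_sqrt hnpos.le
          field_simp
          linear_combination L * A * key
    -- end step4
  -- combine
  have hWval : W ≤ δRC * MC + NRv * (L / Real.sqrt n * A + L * D) := by
    calc W ≤ δRC * MC + NRv * ‖ybar‖ := step3
      _ ≤ δRC * MC + NRv * (L / Real.sqrt n * A + L * D) := by
          exact add_le_add le_rfl (mul_le_mul_of_nonneg_left step4 hNRv0)
  calc mixedNormFam NR (fun i => x' i - xbar')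
      ≤ σR * mixedNormFam NR z := step1
    _ ≤ σR * (A + α * W) := mul_le_mul_of_nonneg_left step2 hσR0
    _ ≤ σR * (A + α * (δRC * MC + NRv * (L / Real.sqrt n * A + L * D))) := by
        apply mul_le_mul_of_nonneg_left _ hσR0
        exact add_le_add le_rfl (mul_le_mul_of_nonneg_left hWval hα.le)
    _ = σR * (1 + α * NRv * L / Real.sqrt n) * A + α * σR * δRC * MC
        + α * σR * NRv * L * D := by ring
end

section
/- Let M = [m_{ij}] ∈ ℝ^{3×3} be a nonnegative irreducible matrix, and let λ* > 0 satisfy m₁₁ < λ*, m₂₂ < λ*, and m₃₃ < λ*. Then the spectral radius ρ_M of M (the maximum modulus of the complex eigenvalues of M) satisfies ρ_M < λ* if and only if det(λ*·I − M) > 0. -/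
open Polynomial

/-- Key scalar inequality: if a nonnegative 3×3 matrix `[[a,b,c],[d,e,f],[g,h,i]]`
with diagonal below `t` has a nonnegative "super-eigenvector" for `t` whose third
coordinate is positive, then `det (t·I - M) ≤ 0`. -/
lemma key3 (t a b c d e f g h i x1 x2 x3 : ℝ)
    (hb : 0 ≤ b) (hc : 0 ≤ c) (hd : 0 ≤ d) (hf : 0 ≤ f) (hg : 0 ≤ g) (hh : 0 ≤ h)
    (ha' : a < t) (he' : e < t) (hi' : i < t)
    (hx1 : 0 ≤ x1) (hx2 : 0 ≤ x2) (hx3 : 0 < x3)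
    (r1 : t * x1 ≤ a*x1 + b*x2 + c*x3)
    (r2 : t * x2 ≤ d*x1 + e*x2 + f*x3)
    (r3 : t * x3 ≤ g*x1 + h*x2 + i*x3) :
    (t-a)*(t-e)*(t-i) - (t-a)*f*h - b*d*(t-i) - c*g*(t-e) - b*f*g - c*d*h ≤ 0 := by
  have hp : 0 < t - a := by linarith
  have hq : 0 < t - e := by linarith
  have hr : 0 < t - i := by linarith
  have R1 : (t-a) * x1 ≤ b*x2 + c*x3 := by nlinarith [r1]
  have R2 : (t-e) * x2 ≤ d*x1 + f*x3 := by nlinarith [r2]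
  have R3 : (t-i) * x3 ≤ g*x1 + h*x2 := by nlinarith [r3]
  rcases le_or_gt ((t-a)*(t-e) - b*d) 0 with hd12 | hd12
  · nlinarith [mul_nonpos_of_nonneg_of_nonpos hr.le hd12,
      mul_nonneg (mul_nonneg hp.le hf) hh, mul_nonneg (mul_nonneg hc hg) hq.le,
      mul_nonneg (mul_nonneg hb hf) hg, mul_nonneg (mul_nonneg hc hd) hh]
  · have e1 : ((t-a)*(t-e) - b*d) * x1 ≤ ((t-e)*c + b*f) * x3 := by
      nlinarith [mul_le_mul_of_nonneg_left R1 hq.le, mul_le_mul_of_nonneg_left R2 hb]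
    have e2 : ((t-a)*(t-e) - b*d) * x2 ≤ (d*c + (t-a)*f) * x3 := by
      nlinarith [mul_le_mul_of_nonneg_left R1 hd, mul_le_mul_of_nonneg_left R2 hp.le]
    have F : ((t-i) * ((t-a)*(t-e) - b*d)) * x3
        ≤ (g*((t-e)*c + b*f) + h*(d*c + (t-a)*f)) * x3 := by
      calc ((t-i) * ((t-a)*(t-e) - b*d)) * x3
          = ((t-a)*(t-e) - b*d) * ((t-i) * x3) := by ring
        _ ≤ ((t-a)*(t-e) - b*d) * (g*x1 + h*x2) :=
            mul_le_mul_of_nonneg_left R3 hd12.le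
        _ = g * (((t-a)*(t-e) - b*d) * x1) + h * (((t-a)*(t-e) - b*d) * x2) := by ring
        _ ≤ g * (((t-e)*c + b*f) * x3) + h * ((d*c + (t-a)*f) * x3) :=
            add_le_add (mul_le_mul_of_nonneg_left e1 hg) (mul_le_mul_of_nonneg_left e2 hh)
        _ = (g*((t-e)*c + b*f) + h*(d*c + (t-a)*f)) * x3 := by ring
    have G : (t-i) * ((t-a)*(t-e) - b*d)
        ≤ g*((t-e)*c + b*f) + h*(d*c + (t-a)*f) :=
      (mul_le_mul_iff_of_pos_right hx3).mp F
    linarith [G]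

lemma eval_charpoly3 (M : Matrix (Fin 3) (Fin 3) ℝ) (t : ℝ) :
    M.charpoly.eval t = (t • (1 : Matrix (Fin 3) (Fin 3) ℝ) - M).det := by
  rw [Matrix.charpoly, ← Polynomial.coe_evalRingHom, RingHom.map_det]
  congr 1
  ext i j
  by_cases h : i = j
  · subst h
    simp [Matrix.charmatrix_apply_eq, Matrix.one_apply]
  · simp [Matrix.charmatrix_apply_ne _ _ _ h, Matrix.one_apply_ne h]

/-- For a nonnegative irreducible `3×3` matrix `M` with diagonal entries
below `λ* > 0`, the spectral radius of `M` is below `λ*` (i.e. every complex eigenvalue has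
modulus `< λ*`) if and only if `det(λ*·I − M) > 0`. -/
theorem push_pull_stmt17 (M : Matrix (Fin 3) (Fin 3) ℝ)
    (hnonneg : ∀ i j, 0 ≤ M i j)
    (hirr : ∀ i j : Fin 3, Relation.ReflTransGen (fun a b : Fin 3 => 0 < M a b) i j)
    (lamStar : ℝ) (hlam : 0 < lamStar)
    (hdiag : ∀ i, M i i < lamStar) :
    (∀ (lam : ℂ) (z : Fin 3 → ℂ), z ≠ 0 →
        (M.map (Complex.ofReal)).mulVec z = lam • z → ‖lam‖ < lamStar) ↔
      0 < (lamStar • (1 : Matrix (Fin 3) (Fin 3) ℝ) - M).det := by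
  constructor
  · -- forward: all eigenvalues small ⇒ det positive
    intro H
    have hnoroot : ∀ t : ℝ, lamStar ≤ t → M.charpoly.eval t ≠ 0 := by
      intro t ht h0
      rw [eval_charpoly3] at h0
      have h0' : ((t : ℂ) • (1 : Matrix (Fin 3) (Fin 3) ℂ) - M.map Complex.ofReal).det = 0 := by
        have h1 : Complex.ofRealHom ((t • (1 : Matrix (Fin 3) (Fin 3) ℝ) - M).det)
            = (((t • (1 : Matrix (Fin 3) (Fin 3) ℝ) - M)).map Complex.ofRealHom).det :=
          RingHom.map_det _ _
        have h2 : ((t • (1 : Matrix (Fin 3) (Fin 3) ℝ) - M)).map Complex.ofRealHom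
            = (t : ℂ) • (1 : Matrix (Fin 3) (Fin 3) ℂ) - M.map Complex.ofReal := by
          ext i j
          by_cases hij : i = j
          · subst hij; simp [Matrix.one_apply]
          · simp [Matrix.one_apply_ne hij]
        rw [h2] at h1
        rw [← h1, h0]
        simp
      obtain ⟨v, hv0, hv⟩ := (Matrix.exists_mulVec_eq_zero_iff).mpr h0'
      have heig : (M.map Complex.ofReal).mulVec v = (t : ℂ) • v := by
        rw [Matrix.sub_mulVec, Matrix.smul_mulVec, Matrix.one_mulVec] at hv
        have := sub_eq_zero.mp hv
        linear_combination -this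
      have := H (t : ℂ) v hv0 heig
      rw [Complex.norm_real, Real.norm_eq_abs] at this
      have := le_abs_self t
      linarith
    have hmono := Matrix.charpoly_monic M
    have hdeg : M.charpoly.natDegree = 3 := by
      simpa using Matrix.charpoly_natDegree_eq_dim M
    have hdegpos : 0 < M.charpoly.degree := by
      rw [Polynomial.degree_eq_natDegree hmono.ne_zero, hdeg]
      norm_num
    have htend := Polynomial.tendsto_atTop_of_leadingCoeff_nonneg M.charpoly hdegpos
      (by rw [hmono.leadingCoeff]; exact zero_le_one)
    have hev : ∀ᶠ T in Filter.atTop, lamStar ≤ T ∧ 0 < M.charpoly.eval T :=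
      (Filter.eventually_ge_atTop lamStar).and (htend.eventually_gt_atTop 0)
    obtain ⟨T, hT1, hT2⟩ := hev.exists
    by_contra hle
    push_neg at hle
    have hlt : M.charpoly.eval lamStar < 0 := by
      rw [eval_charpoly3]
      have hne := hnoroot lamStar le_rfl
      rw [eval_charpoly3] at hne
      exact hle.lt_of_ne hne
    have hcont : ContinuousOn (fun s => M.charpoly.eval s) (Set.Icc lamStar T) :=
      (Polynomial.continuous _).continuousOn
    have hsub := intermediate_value_Icc hT1 hcont
    have h0mem : (0 : ℝ) ∈ Set.Icc (M.charpoly.eval lamStar) (M.charpoly.eval T) :=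
      ⟨hlt.le, hT2.le⟩
    obtain ⟨c, hc, hfc⟩ := hsub h0mem
    exact hnoroot c hc.1 hfc
  · -- backward: det positive ⇒ all eigenvalues small
    intro hdet lam z hz heig
    by_contra habs
    push_neg at habs
    set x : Fin 3 → ℝ := fun j => ‖z j‖ with hxdef
    have hxnn : ∀ j, 0 ≤ x j := fun j => (norm_nonneg _)
    have row : ∀ i : Fin 3, lamStar * x i ≤ M i 0 * x 0 + M i 1 * x 1 + M i 2 * x 2 := by
      intro i
      have hi := congrFun heig i
      simp only [Matrix.mulVec, dotProduct, Fin.sum_univ_three, Matrix.map_apply,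
        Pi.smul_apply, smul_eq_mul] at hi
      have h1 : ‖(M i 0 : ℂ) * z 0 + (M i 1 : ℂ) * z 1 + (M i 2 : ℂ) * z 2‖
          ≤ ‖(M i 0 : ℂ) * z 0‖ + ‖(M i 1 : ℂ) * z 1‖
            + ‖(M i 2 : ℂ) * z 2‖ :=
        (norm_add_le _ _).trans (add_le_add_left (norm_add_le _ _) _)
      rw [hi] at h1
      simp only [norm_mul, Complex.norm_real, Real.norm_eq_abs] at h1
      have habs0 : ∀ j : Fin 3, |M i j| = M i j := fun j => abs_of_nonneg (hnonneg i j)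
      rw [habs0 0, habs0 1, habs0 2] at h1
      have h2 : lamStar * x i ≤ ‖lam‖ * ‖z i‖ :=
        mul_le_mul_of_nonneg_right habs (norm_nonneg _)
      exact h2.trans h1
    obtain ⟨k, hk⟩ := Function.ne_iff.mp hz
    have hxk : 0 < x k := norm_pos_iff.mpr hk
    have hdetexp : (lamStar • (1 : Matrix (Fin 3) (Fin 3) ℝ) - M).det
        = (lamStar - M 0 0)*(lamStar - M 1 1)*(lamStar - M 2 2)
          - (lamStar - M 0 0)*(M 1 2)*(M 2 1) - (M 0 1)*(M 1 0)*(lamStar - M 2 2)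
          - (M 0 2)*(M 2 0)*(lamStar - M 1 1) - (M 0 1)*(M 1 2)*(M 2 0)
          - (M 0 2)*(M 1 0)*(M 2 1) := by
      simp [Matrix.det_fin_three, Matrix.one_apply]
      ring
    have r0 := row 0
    have r1 := row 1
    have r2 := row 2
    fin_cases k
    · -- x 0 > 0 : slots (1,2,3) ↦ indices (1,2,0)
      have := key3 lamStar (M 1 1) (M 1 2) (M 1 0) (M 2 1) (M 2 2) (M 2 0)
        (M 0 1) (M 0 2) (M 0 0) (x 1) (x 2) (x 0)
        (hnonneg 1 2) (hnonneg 1 0) (hnonneg 2 1) (hnonneg 2 0) (hnonneg 0 1) (hnonneg 0 2)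
        (hdiag 1) (hdiag 2) (hdiag 0) (hxnn 1) (hxnn 2) hxk
        (by linarith [r1]) (by linarith [r2]) (by linarith [r0])
      rw [hdetexp] at hdet
      nlinarith [this]
    · -- x 1 > 0 : slots (1,2,3) ↦ indices (2,0,1)
      have := key3 lamStar (M 2 2) (M 2 0) (M 2 1) (M 0 2) (M 0 0) (M 0 1)
        (M 1 2) (M 1 0) (M 1 1) (x 2) (x 0) (x 1)
        (hnonneg 2 0) (hnonneg 2 1) (hnonneg 0 2) (hnonneg 0 1) (hnonneg 1 2) (hnonneg 1 0)
        (hdiag 2) (hdiag 0) (hdiag 1) (hxnn 2) (hxnn 0) hxk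
        (by linarith [r2]) (by linarith [r0]) (by linarith [r1])
      rw [hdetexp] at hdet
      nlinarith [this]
    · -- x 2 > 0 : identity slots
      have := key3 lamStar (M 0 0) (M 0 1) (M 0 2) (M 1 0) (M 1 1) (M 1 2)
        (M 2 0) (M 2 1) (M 2 2) (x 0) (x 1) (x 2)
        (hnonneg 0 1) (hnonneg 0 2) (hnonneg 1 0) (hnonneg 1 2) (hnonneg 2 0) (hnonneg 2 1)
        (hdiag 0) (hdiag 1) (hdiag 2) (hxnn 0) (hxnn 1) hxk
        (by linarith [r0]) (by linarith [r1]) (by linarith [r2])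
      rw [hdetexp] at hdet
      nlinarith [this]
end

section
/- Let A ∈ ℝ^{3×3} be a matrix with all entries strictly positive, and let ρ_A denote its spectral radius (the maximum modulus of its complex eigenvalues). Let (V_k)_{k≥0} be a sequence of vectors in ℝ³ with nonnegative entries satisfying the componentwise inequality V_{k+1} ≤ A·V_k for all k ≥ 0. Then there exists a constant Cₒ ≥ 0 such that for all k ≥ 0 and each component i ∈ {1,2,3}, (V_k)_i ≤ Cₒ·ρ_A^k; in particular, if ρ_A < 1 then every component of V_k converges to 0 at a linear (geometric) rate. -/
open Matrix Finset

open Matrix Finset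

lemma perron3 (A : Matrix (Fin 3) (Fin 3) ℝ) (hA : ∀ i j, 0 < A i j) :
    ∃ (s : ℝ) (x : Fin 3 → ℝ), 0 < s ∧ (∀ i, 0 < x i) ∧ (∀ i, x i ≤ 1) ∧
      A.mulVec x = s • x := by
  classical
  set K : Set (Fin 3 → ℝ) := {x | (∀ i, 0 ≤ x i) ∧ ∑ i, x i = 1} with hKdef
  have hmemK : ∀ x ∈ K, ∀ i, x i ≤ 1 := by
    intro x hx i
    calc x i ≤ ∑ j, x j := Finset.single_le_sum (fun j _ => hx.1 j) (mem_univ i)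
    _ = 1 := hx.2
  have hclosed : IsClosed K := by
    have h1 : IsClosed {x : Fin 3 → ℝ | ∀ i, 0 ≤ x i} := by
      have : {x : Fin 3 → ℝ | ∀ i, 0 ≤ x i} = ⋂ i, {x | 0 ≤ x i} := by
        ext x; simp
      rw [this]
      exact isClosed_iInter fun i => isClosed_le continuous_const (continuous_apply i)
    have h2 : IsClosed {x : Fin 3 → ℝ | ∑ i, x i = 1} :=
      isClosed_eq (by fun_prop) continuous_const
    exact h1.inter h2
  have hsub : K ⊆ Metric.closedBall 0 1 := by
    intro x hx
    rw [Metric.mem_closedBall, dist_zero_right]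
    rw [pi_norm_le_iff_of_nonneg (by norm_num)]
    intro i
    rw [Real.norm_eq_abs, abs_of_nonneg (hx.1 i)]
    exact hmemK x hx i
  have hKc : IsCompact K :=
    (isCompact_closedBall (0 : Fin 3 → ℝ) 1).of_isClosed_subset hclosed hsub
  set T : Set ℝ := {t | ∃ x ∈ K, ∀ i, t * x i ≤ A.mulVec x i} with hTdef
  have hx0K : (fun _ : Fin 3 => (1:ℝ)/3) ∈ K := by
    constructor
    · intro i; norm_num
    · simp
  have hT0 : (0:ℝ) ∈ T := by
    refine ⟨fun _ => 1/3, hx0K, fun i => ?_⟩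
    simp only [zero_mul, mulVec, dotProduct]
    apply Finset.sum_nonneg
    intro j _
    exact mul_nonneg (hA i j).le (by norm_num)
  set B : ℝ := 3 * ∑ i, ∑ j, A i j with hBdef
  have hBpos : 0 < B := by
    apply mul_pos (by norm_num)
    apply Finset.sum_pos (fun i _ => Finset.sum_pos (fun j _ => hA i j) univ_nonempty) univ_nonempty
  have hTb : BddAbove T := by
    refine ⟨B, fun t ht => ?_⟩
    obtain ⟨x, hxK, hx⟩ := ht
    rcases le_or_gt t 0 with h | h
    · exact h.trans hBpos.le
    · obtain ⟨i, hi⟩ : ∃ i, (1:ℝ)/3 ≤ x i := by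
        by_contra hcon
        push_neg at hcon
        have : ∑ j, x j < ∑ _j : Fin 3, (1:ℝ)/3 :=
          Finset.sum_lt_sum_of_nonempty univ_nonempty (fun j _ => hcon j)
        rw [hxK.2] at this
        norm_num at this
      have h1 : t * (1/3) ≤ t * x i := by nlinarith
      have h2 : t * x i ≤ A.mulVec x i := hx i
      have h3 : A.mulVec x i ≤ ∑ j, A i j := by
        rw [mulVec, dotProduct]
        apply Finset.sum_le_sum
        intro j _
        nlinarith [hA i j, hmemK x hxK j, hxK.1 j]
      have h4 : ∑ j, A i j ≤ ∑ i, ∑ j, A i j :=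
        Finset.single_le_sum (f := fun i => ∑ j, A i j)
          (fun i _ => Finset.sum_nonneg fun j _ => (hA i j).le) (mem_univ i)
      rw [hBdef]
      nlinarith
  set s : ℝ := sSup T with hsdef
  set t₀ : ℝ := (∑ j, A 0 j) ⊓ ((∑ j, A 1 j) ⊓ (∑ j, A 2 j)) with ht₀def
  have ht₀pos : 0 < t₀ := by
    apply lt_min (Finset.sum_pos (fun j _ => hA 0 j) univ_nonempty)
    exact lt_min (Finset.sum_pos (fun j _ => hA 1 j) univ_nonempty)
      (Finset.sum_pos (fun j _ => hA 2 j) univ_nonempty)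
  have ht₀mem : t₀ ∈ T := by
    refine ⟨fun _ => 1/3, hx0K, fun i => ?_⟩
    have hle : t₀ ≤ ∑ j, A i j := by
      fin_cases i
      · exact min_le_left _ _
      · exact (min_le_right _ _).trans (min_le_left _ _)
      · exact (min_le_right _ _).trans (min_le_right _ _)
    rw [mulVec, dotProduct]
    calc t₀ * (1/3) ≤ (∑ j, A i j) * (1/3) := by nlinarith
    _ = ∑ j, A i j * (1/3) := by rw [Finset.sum_mul]
  have hspos : 0 < s := lt_of_lt_of_le ht₀pos (le_csSup hTb ht₀mem)
  -- maximizing sequence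
  have hseq : ∀ n : ℕ, ∃ x ∈ K, ∀ i, (s - 1/(n+1)) * x i ≤ A.mulVec x i := by
    intro n
    obtain ⟨t, htT, htgt⟩ := exists_lt_of_lt_csSup ⟨0, hT0⟩
      (show s - 1/(n+1) < s by
        have : (0:ℝ) < 1/(n+1) := by positivity
        linarith)
    obtain ⟨x, hxK, hx⟩ := htT
    exact ⟨x, hxK, fun i =>
      (mul_le_mul_of_nonneg_right htgt.le (hxK.1 i)).trans (hx i)⟩
  choose xs hxsK hxs using hseq
  obtain ⟨w, hwK, φ, hφ, hconv⟩ := hKc.tendsto_subseq hxsK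
  have hlim : ∀ i, s * w i ≤ A.mulVec w i := by
    intro i
    have hφtop : Filter.Tendsto φ Filter.atTop Filter.atTop := hφ.tendsto_atTop
    have h1 : Filter.Tendsto (fun n => (s - 1/(φ n + 1)) * xs (φ n) i)
        Filter.atTop (nhds (s * w i)) := by
      apply Filter.Tendsto.mul
      · have : Filter.Tendsto (fun n : ℕ => (1:ℝ)/(n+1)) Filter.atTop (nhds 0) :=
          tendsto_one_div_add_atTop_nhds_zero_nat
        have := (this.comp hφtop).const_sub s
        simpa using this
      · exact ((continuous_apply i).tendsto w).comp hconv
    have h2 : Filter.Tendsto (fun n => A.mulVec (xs (φ n)) i)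
        Filter.atTop (nhds (A.mulVec w i)) := by
      simp only [mulVec, dotProduct]
      apply tendsto_finset_sum
      intro j _
      exact (((continuous_apply j).tendsto w).comp hconv).const_mul (A i j)
    exact le_of_tendsto_of_tendsto' h1 h2 (fun n => hxs (φ n) i)
  set y : Fin 3 → ℝ := A.mulVec w with hydef
  have hwnn : ∀ i, 0 ≤ w i := hwK.1
  have hwex : ∃ j, 0 < w j := by
    by_contra hcon
    push_neg at hcon
    have hz : ∀ j, w j = 0 := fun j => le_antisymm (hcon j) (hwnn j)
    have hsum := hwK.2
    rw [Finset.sum_eq_zero (fun j _ => hz j)] at hsum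
    norm_num at hsum
  have hypos : ∀ i, 0 < y i := by
    intro i
    obtain ⟨j0, hj0⟩ := hwex
    rw [hydef, mulVec, dotProduct]
    apply Finset.sum_pos'
    · intro j _; exact mul_nonneg (hA i j).le (hwnn j)
    · exact ⟨j0, mem_univ j0, mul_pos (hA i j0) hj0⟩
  have heig : A.mulVec w = s • w := by
    by_contra hne
    obtain ⟨j0, hj0⟩ : ∃ j, y j ≠ s * w j := by
      by_contra hcon
      push_neg at hcon
      apply hne
      funext j
      simpa using hcon j
    have hj0lt : s * w j0 < y j0 := lt_of_le_of_ne (hlim j0) (Ne.symm hj0)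
    have hst : ∀ i, s * y i < A.mulVec y i := by
      intro i
      have hexp : A.mulVec y i - s * y i = ∑ j, A i j * (y j - s * w j) := by
        rw [hydef]
        simp only [mulVec, dotProduct]
        rw [Finset.mul_sum, ← Finset.sum_sub_distrib]
        congr 1
        funext j
        ring
      have hpos : 0 < ∑ j, A i j * (y j - s * w j) := by
        apply Finset.sum_pos'
        · intro j _
          exact mul_nonneg (hA i j).le (by linarith [hlim j])
        · exact ⟨j0, mem_univ j0, mul_pos (hA i j0) (by linarith)⟩
      linarith [hexp ▸ hpos]
    set m : Fin 3 → ℝ := fun i => (A.mulVec y i - s * y i) / y i with hmdef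
    set ε : ℝ := m 0 ⊓ (m 1 ⊓ m 2) with hεdef
    have hmpos : ∀ i, 0 < m i := fun i => div_pos (by linarith [hst i]) (hypos i)
    have hεpos : 0 < ε := lt_min (hmpos 0) (lt_min (hmpos 1) (hmpos 2))
    have hεm : ∀ i, ε ≤ m i := by
      intro i
      fin_cases i
      · exact min_le_left _ _
      · exact (min_le_right _ _).trans (min_le_left _ _)
      · exact (min_le_right _ _).trans (min_le_right _ _)
    set c : ℝ := ∑ i, y i with hcdef
    have hcpos : 0 < c := Finset.sum_pos (fun i _ => hypos i) univ_nonempty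
    have hmem : s + ε ∈ T := by
      refine ⟨c⁻¹ • y, ⟨fun i => ?_, ?_⟩, fun i => ?_⟩
      · simp only [Pi.smul_apply, smul_eq_mul]
        exact mul_nonneg (by positivity) (hypos i).le
      · simp only [Pi.smul_apply, smul_eq_mul]
        rw [← Finset.mul_sum, ← hcdef, inv_mul_cancel₀ hcpos.ne']
      · have hkey : (s + ε) * y i ≤ A.mulVec y i := by
          have : ε * y i ≤ m i * y i :=
            mul_le_mul_of_nonneg_right (hεm i) (hypos i).le
          rw [hmdef] at this
          simp only at this
          rw [div_mul_cancel₀ _ (hypos i).ne'] at this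
          linarith
        rw [mulVec_smul]
        simp only [Pi.smul_apply, smul_eq_mul]
        calc (s + ε) * (c⁻¹ * y i) = c⁻¹ * ((s + ε) * y i) := by ring
        _ ≤ c⁻¹ * (A.mulVec y i) := by
            apply mul_le_mul_of_nonneg_left hkey (by positivity)
    have : s + ε ≤ s := le_csSup hTb hmem
    linarith
  have hwpos : ∀ i, 0 < w i := by
    intro i
    have h1 : 0 < y i := hypos i
    rw [hydef, heig] at h1
    simp only [Pi.smul_apply, smul_eq_mul] at h1
    by_contra hcon
    push_neg at hcon
    nlinarith
  exact ⟨s, w, hspos, hwpos, hmemK w hwK, heig⟩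

/-- The spectral radius of a real `3×3` matrix: the maximum modulus of its complex
eigenvalues (expressed as a supremum). -/
noncomputable def specRad3 (A : Matrix (Fin 3) (Fin 3) ℝ) : ℝ :=
  sSup {r : ℝ | ∃ (lam : ℂ) (z : Fin 3 → ℂ), z ≠ 0 ∧
    (A.map (Complex.ofReal)).mulVec z = lam • z ∧ r = ‖lam‖}

lemma specRad3_bddAbove (A : Matrix (Fin 3) (Fin 3) ℝ) (hA : ∀ i j, 0 < A i j) :
    BddAbove {r : ℝ | ∃ (lam : ℂ) (z : Fin 3 → ℂ), z ≠ 0 ∧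
      (A.map (Complex.ofReal)).mulVec z = lam • z ∧ r = ‖lam‖} := by
  classical
  refine ⟨∑ i, ∑ j, A i j, fun r hr => ?_⟩
  obtain ⟨lam, z, hz, heq, hr⟩ := hr
  obtain ⟨i, _, hi⟩ := Finset.exists_max_image (Finset.univ : Finset (Fin 3))
    (fun j => ‖z j‖) Finset.univ_nonempty
  have hzi : 0 < ‖z i‖ := by
    by_contra hcon
    push_neg at hcon
    apply hz
    funext j
    have h1 : ‖z j‖ ≤ 0 := (hi j (Finset.mem_univ j)).trans hcon
    have h2 : ‖z j‖ = 0 := le_antisymm h1 (norm_nonneg _)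
    simpa using h2
  have hcomp : ((A.map (Complex.ofReal)).mulVec z) i = lam * z i := by
    rw [heq]; simp
  have hkey : ‖lam‖ * ‖z i‖ ≤ (∑ j, A i j) * ‖z i‖ := by
    calc ‖lam‖ * ‖z i‖ = ‖lam * z i‖ := (norm_mul _ _).symm
    _ = ‖∑ j, (A i j : ℂ) * z j‖ := by
        rw [← hcomp]; simp [Matrix.mulVec, dotProduct, Matrix.map_apply]
    _ ≤ ∑ j, ‖(A i j : ℂ) * z j‖ := norm_sum_le _ _
    _ = ∑ j, A i j * ‖z j‖ := by
        apply Finset.sum_congr rfl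
        intro j _
        rw [norm_mul, Complex.norm_real, Real.norm_eq_abs, abs_of_pos (hA i j)]
    _ ≤ ∑ j, A i j * ‖z i‖ := by
        apply Finset.sum_le_sum
        intro j _
        exact mul_le_mul_of_nonneg_left (hi j (Finset.mem_univ j)) (hA i j).le
    _ = (∑ j, A i j) * ‖z i‖ := by rw [Finset.sum_mul]
  have h1 : ‖lam‖ ≤ ∑ j, A i j := le_of_mul_le_mul_right hkey hzi
  have h2 : ∑ j, A i j ≤ ∑ i, ∑ j, A i j :=
    Finset.single_le_sum (f := fun i => ∑ j, A i j)
      (fun i _ => Finset.sum_nonneg fun j _ => (hA i j).le) (Finset.mem_univ i)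
  rw [hr]
  linarith

lemma le_specRad3 (A : Matrix (Fin 3) (Fin 3) ℝ) (hA : ∀ i j, 0 < A i j)
    (s : ℝ) (x : Fin 3 → ℝ) (hs : 0 < s) (hx : ∀ i, 0 < x i)
    (heig : A.mulVec x = s • x) : s ≤ specRad3 A := by
  apply le_csSup (specRad3_bddAbove A hA)
  refine ⟨(s : ℂ), fun i => (x i : ℂ), ?_, ?_, ?_⟩
  · intro hcon
    have := congrFun hcon 0
    simp only [Pi.zero_apply, Complex.ofReal_eq_zero] at this
    exact (hx 0).ne' this
  · funext i
    have hre : ∑ j, A i j * x j = s * x i := by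
      have := congrFun heig i
      simpa [Matrix.mulVec, dotProduct] using this
    simp only [Matrix.mulVec, dotProduct, Matrix.map_apply, Pi.smul_apply,
      smul_eq_mul]
    have hcast := congrArg (Complex.ofReal) hre
    push_cast at hcast
    exact hcast
  · rw [Complex.norm_real, Real.norm_eq_abs, abs_of_pos hs]

/-- If `A ∈ ℝ^{3×3}` has strictly positive entries and the nonnegative
vectors `V_k` satisfy `V_{k+1} ≤ A V_k` componentwise, then there is `C₀ ≥ 0` with
`(V_k)_i ≤ C₀·ρ_A^k` for all `k` and `i`; in particular each component converges to `0`
geometrically when `ρ_A < 1`. -/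
theorem push_pull_stmt18 (A : Matrix (Fin 3) (Fin 3) ℝ)
    (hA : ∀ i j, 0 < A i j)
    (V : ℕ → Fin 3 → ℝ)
    (hVnonneg : ∀ k i, 0 ≤ V k i)
    (hVrec : ∀ k i, V (k + 1) i ≤ ∑ j, A i j * V k j) :
    ∃ C₀ : ℝ, 0 ≤ C₀ ∧ ∀ k i, V k i ≤ C₀ * (specRad3 A) ^ k := by
  obtain ⟨s, x, hs, hx, hx1, heig⟩ := perron3 A hA
  have hsρ : s ≤ specRad3 A := le_specRad3 A hA s x hs hx heig
  set mV : ℝ := V 0 0 ⊔ (V 0 1 ⊔ V 0 2) with hmVdef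
  set mx : ℝ := x 0 ⊓ (x 1 ⊓ x 2) with hmxdef
  have hmV : ∀ i, V 0 i ≤ mV := by
    intro i
    fin_cases i
    · exact le_max_left _ _
    · exact (le_max_left _ _).trans (le_max_right _ _)
    · exact (le_max_right _ _).trans (le_max_right _ _)
  have hmVnn : 0 ≤ mV := (hVnonneg 0 0).trans (hmV 0)
  have hmx : ∀ i, mx ≤ x i := by
    intro i
    fin_cases i
    · exact min_le_left _ _
    · exact (min_le_right _ _).trans (min_le_left _ _)
    · exact (min_le_right _ _).trans (min_le_right _ _)
  have hmxpos : 0 < mx := lt_min (hx 0) (lt_min (hx 1) (hx 2))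
  set C : ℝ := mV / mx with hCdef
  have hCnn : 0 ≤ C := div_nonneg hmVnn hmxpos.le
  have hind : ∀ k i, V k i ≤ C * s ^ k * x i := by
    intro k
    induction k with
    | zero =>
      intro i
      have h1 : V 0 i ≤ mV := hmV i
      have h2 : mV = C * mx := by
        rw [hCdef, div_mul_cancel₀ _ hmxpos.ne']
      have h3 : C * mx ≤ C * x i := mul_le_mul_of_nonneg_left (hmx i) hCnn
      simpa using h1.trans (h2 ▸ h3)
    | succ k ih =>
      intro i
      have hAx : ∑ j, A i j * x j = s * x i := by
        have := congrFun heig i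
        simpa [Matrix.mulVec, dotProduct] using this
      calc V (k + 1) i ≤ ∑ j, A i j * V k j := hVrec k i
      _ ≤ ∑ j, A i j * (C * s ^ k * x j) := by
          apply Finset.sum_le_sum
          intro j _
          exact mul_le_mul_of_nonneg_left (ih j) (hA i j).le
      _ = C * s ^ k * ∑ j, A i j * x j := by
          rw [Finset.mul_sum]
          apply Finset.sum_congr rfl
          intro j _
          ring
      _ = C * s ^ (k + 1) * x i := by rw [hAx]; ring
  refine ⟨C, hCnn, fun k i => ?_⟩
  calc V k i ≤ C * s ^ k * x i := hind k i
  _ ≤ C * s ^ k * 1 := mul_le_mul_of_nonneg_left (hx1 i) (by positivity)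
  _ = C * s ^ k := by ring
  _ ≤ C * (specRad3 A) ^ k :=
      mul_le_mul_of_nonneg_left (pow_le_pow_left₀ hs.le hsρ k) hCnn
end
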